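/- arXiv:1906.12305 — 4 statements merged into one kernel-verified Lean document; each statement's English description precedes it below -/
import Mathlib

section
/- Let d ≥ 2, let S ⊆ ℝ be an open set, and let φ : S → [0,∞) be either (i) a linear polynomial that is nonnegative on S, or (ii) the square root of a polynomial of degree at most 2 that is nonnegative on S. Let w₁ be a nonnegative weight on S with all moments ∫_S |t|^k φ(t)^d w₁(t) dt finite, and let w₂ be a nonnegative centrally symmetric weight on the unit ball B^d (w₂(−u) = w₂(u)) with ∫_{B^d} w₂(u) du = 1. Let V^{d+1} = {(x,t) ∈ ℝ^d × ℝ : ‖x‖ ≤ φ(t), t ∈ S}, W(x,t) := w₁(t) w₂(x/φ(t)), and ⟨f,g⟩_W := b_W ∫_{V^{d+1}} f g W dx dt with b_W normalized so that ⟨1,1⟩_W = 1. For each m, let {P_k^m : k ∈ ℕ_0^d, |k| = m} be an orthonormal basis of the space of orthogonal polynomials of degree m on B^d with respect to w₂, and assume each P_k^m is a sum of monomials of degree ≡ m (mod 2). For each m, let q_n^{[m]} be an orthogonal polynomial of degree n with respect to the weight φ(t)^{2m+d} w₁(t) on S, and define Q_{m,k}^n(x,t) := q_{n−m}^{[m]}(t)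 φ(t)^m P_k^m(x/φ(t)) for |k| = m, 0 ≤ m ≤ n. Then each Q_{m,k}^n is a polynomial of total degree at most n in (x,t), and ⟨Q_{m,k}^n, Q_{m',k'}^{n'}⟩_W = h_m^n δ_{n,n'} δ_{m,m'} δ_{k,k'}, where h_m^n = b_W ∫_S [q_{n−m}^{[m]}(t)]² φ(t)^{2m+d} w₁(t) dt > 0. -/
open MeasureTheory MvPolynomial Metric

noncomputable section

/-- The quadratic domain of revolution `V^{d+1} = {(x,t) : ‖x‖ ≤ φ(t), t ∈ S}`. -/
def quadBody (d : ℕ) (Sset : Set ℝ) (φ : ℝ → ℝ) :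
    Set (EuclideanSpace ℝ (Fin d) × ℝ) :=
  {z | z.2 ∈ Sset ∧ ‖z.1‖ ≤ φ z.2}

lemma bob_polyBound (p : Polynomial ℝ) (N : ℕ) (hN : p.natDegree ≤ N) :
    ∃ C : ℝ, 0 ≤ C ∧ ∀ t : ℝ, |p.eval t| ≤ C * (1 + |t|) ^ N := by
  refine ⟨∑ i ∈ Finset.range (p.natDegree + 1), |p.coeff i|,
    Finset.sum_nonneg fun i _ => abs_nonneg _, fun t => ?_⟩
  rw [Polynomial.eval_eq_sum_range, Finset.sum_mul]
  refine (Finset.abs_sum_le_sum_abs _ _).trans (Finset.sum_le_sum fun i hi => ?_)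
  rw [abs_mul, abs_pow]
  have h1 : (1:ℝ) ≤ 1 + |t| := by simp [abs_nonneg]
  have h2 : |t| ^ i ≤ (1 + |t|) ^ N := by
    calc |t| ^ i ≤ (1 + |t|) ^ i := pow_le_pow_left₀ (abs_nonneg t) (by linarith) i
    _ ≤ (1 + |t|) ^ N := pow_le_pow_right₀ h1 (by
        have := Finset.mem_range.1 hi
        have hle := hN
        omega)
  exact mul_le_mul_of_nonneg_left h2 (abs_nonneg _)

lemma bob_scale {d : ℕ} (G : EuclideanSpace ℝ (Fin d) → ℝ) {r : ℝ} (hr : 0 < r) :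
    ∫ x in closedBall (0 : EuclideanSpace ℝ (Fin d)) r, G (r⁻¹ • x) =
      r ^ d * ∫ u in closedBall (0 : EuclideanSpace ℝ (Fin d)) 1, G u := by
  have h1 : ∀ x : EuclideanSpace ℝ (Fin d), x ∈ closedBall (0 : EuclideanSpace ℝ (Fin d)) r ↔
      r⁻¹ • x ∈ closedBall (0 : EuclideanSpace ℝ (Fin d)) 1 := by
    intro x
    simp only [mem_closedBall, dist_zero_right, norm_smul, norm_inv, Real.norm_eq_abs,
      abs_of_pos hr]
    rw [inv_mul_le_iff₀ hr, mul_one]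
  have key : (closedBall (0 : EuclideanSpace ℝ (Fin d)) r).indicator (fun x => G (r⁻¹ • x)) =
      fun x => (closedBall (0 : EuclideanSpace ℝ (Fin d)) 1).indicator G (r⁻¹ • x) := by
    funext x
    by_cases hx : x ∈ closedBall (0 : EuclideanSpace ℝ (Fin d)) r
    · rw [Set.indicator_of_mem hx, Set.indicator_of_mem ((h1 x).1 hx)]
    · rw [Set.indicator_of_notMem hx, Set.indicator_of_notMem (fun h => hx ((h1 x).2 h))]
  rw [← integral_indicator (measurableSet_closedBall), key,
    Measure.integral_comp_inv_smul volume _ r, integral_indicator (measurableSet_closedBall)]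
  rw [finrank_euclideanSpace_fin, abs_of_pos (pow_pos hr d), smul_eq_mul]

lemma bob_scaleInt {d : ℕ} {G : EuclideanSpace ℝ (Fin d) → ℝ}
    (hG : IntegrableOn G (closedBall (0 : EuclideanSpace ℝ (Fin d)) 1)) {r : ℝ} (hr : 0 < r) :
    IntegrableOn (fun x => G (r⁻¹ • x)) (closedBall (0 : EuclideanSpace ℝ (Fin d)) r) := by
  have h1 : ∀ x : EuclideanSpace ℝ (Fin d), x ∈ closedBall (0 : EuclideanSpace ℝ (Fin d)) r ↔
      r⁻¹ • x ∈ closedBall (0 : EuclideanSpace ℝ (Fin d)) 1 := by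
    intro x
    simp only [mem_closedBall, dist_zero_right, norm_smul, norm_inv, Real.norm_eq_abs,
      abs_of_pos hr]
    rw [inv_mul_le_iff₀ hr, mul_one]
  rw [← integrable_indicator_iff measurableSet_closedBall]
  have key : (closedBall (0 : EuclideanSpace ℝ (Fin d)) r).indicator (fun x => G (r⁻¹ • x)) =
      fun x => (closedBall (0 : EuclideanSpace ℝ (Fin d)) 1).indicator G (r⁻¹ • x) := by
    funext x
    by_cases hx : x ∈ closedBall (0 : EuclideanSpace ℝ (Fin d)) r
    · rw [Set.indicator_of_mem hx, Set.indicator_of_mem ((h1 x).1 hx)]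
    · rw [Set.indicator_of_notMem hx, Set.indicator_of_notMem (fun h => hx ((h1 x).2 h))]
  rw [key]
  rw [integrable_comp_smul_iff volume _ (inv_ne_zero hr.ne')]
  exact hG.integrable_indicator measurableSet_closedBall

lemma bob_momBound (d : ℕ) (Sset : Set ℝ) (φ w₁ : ℝ → ℝ)
    (hmom : ∀ k : ℕ, IntegrableOn (fun t => |t| ^ k * (φ t) ^ d * w₁ t) Sset) (M : ℕ) :
    IntegrableOn (fun t => (1 + |t|) ^ M * ((φ t) ^ d * w₁ t)) Sset := by
  have : (fun t => (1 + |t|) ^ M * ((φ t) ^ d * w₁ t)) =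
      fun t => ∑ j ∈ Finset.range (M + 1), (M.choose j : ℝ) *
        (|t| ^ j * (φ t) ^ d * w₁ t) := by
    funext t
    rw [add_comm (1:ℝ), add_pow]
    rw [Finset.sum_mul]
    refine Finset.sum_congr rfl fun j hj => ?_
    ring
  rw [this]
  exact integrable_finset_sum _ fun j hj => ((hmom j).const_mul _)

lemma bob_intS (d : ℕ) (Sset : Set ℝ) (hSmeas : MeasurableSet Sset) (φ w₁ : ℝ → ℝ)
    (hw₁0 : ∀ t ∈ Sset, 0 ≤ w₁ t) (hφ0 : ∀ t ∈ Sset, 0 ≤ φ t)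
    (hmom : ∀ k : ℕ, IntegrableOn (fun t => |t| ^ k * (φ t) ^ d * w₁ t) Sset)
    (h : ℝ → ℝ) (hmeas : Measurable h) (hφmeas : Measurable φ) (hw₁meas : Measurable w₁)
    (C : ℝ) (M : ℕ) (hb : ∀ t ∈ Sset, |h t| ≤ C * (1 + |t|) ^ M) :
    IntegrableOn (fun t => h t * ((φ t) ^ d * w₁ t)) Sset := by
  have hw : ∀ t ∈ Sset, 0 ≤ (φ t) ^ d * w₁ t := by
    intro t ht
    exact mul_nonneg (pow_nonneg (hφ0 t ht) d) (hw₁0 t ht)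
  refine Integrable.mono' (((bob_momBound d Sset φ w₁ hmom M).const_mul C)) ?_ ?_
  · exact ((hmeas.mul ((hφmeas.pow_const d).mul hw₁meas))).aestronglyMeasurable
  · rw [ae_restrict_iff' hSmeas]
    filter_upwards with t
    intro ht
    rw [Real.norm_eq_abs, abs_mul, abs_of_nonneg (hw t ht)]
    calc |h t| * ((φ t)^d * w₁ t) ≤ (C * (1+|t|)^M) * ((φ t)^d * w₁ t) :=
        mul_le_mul_of_nonneg_right (hb t ht) (hw t ht)
      _ = C * ((1+|t|)^M * ((φ t)^d * w₁ t)) := by ring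

lemma bob_keyFubini (d : ℕ) (hd : 1 ≤ d) (Sset : Set ℝ) (hSmeas : MeasurableSet Sset)
    (φ : ℝ → ℝ) (hφmeas : Measurable φ) (hφ0 : ∀ t ∈ Sset, 0 ≤ φ t)
    (w₁ : ℝ → ℝ) (hw₁meas : Measurable w₁) (hw₁0 : ∀ t ∈ Sset, 0 ≤ w₁ t)
    (hmom : ∀ k : ℕ, IntegrableOn (fun t => |t| ^ k * (φ t) ^ d * w₁ t) Sset)
    (G : EuclideanSpace ℝ (Fin d) → ℝ) (hGmeas : Measurable G)
    (hGint : IntegrableOn G (closedBall (0 : EuclideanSpace ℝ (Fin d)) 1))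
    (g : ℝ → ℝ) (hgmeas : Measurable g)
    (C : ℝ) (M : ℕ) (hb : ∀ t ∈ Sset, |g t| ≤ C * (1 + |t|) ^ M) :
    ∫ z in quadBody d Sset φ, G ((φ z.2)⁻¹ • z.1) * (g z.2 * w₁ z.2) ∂volume =
      (∫ u in closedBall (0 : EuclideanSpace ℝ (Fin d)) 1, G u) *
        ∫ t in Sset, g t * ((φ t) ^ d * w₁ t) := by
  set A : Set (EuclideanSpace ℝ (Fin d) × ℝ) := quadBody d Sset φ with hAdef
  set F : EuclideanSpace ℝ (Fin d) × ℝ → ℝ :=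
    fun z => G ((φ z.2)⁻¹ • z.1) * (g z.2 * w₁ z.2) with hFdef
  have hA : MeasurableSet A := by
    apply MeasurableSet.inter
    · exact hSmeas.preimage measurable_snd
    · exact measurableSet_le (measurable_fst.norm) (hφmeas.comp measurable_snd)
  have hsm : Measurable fun z : EuclideanSpace ℝ (Fin d) × ℝ => (φ z.2)⁻¹ • z.1 := by
    have h1 : Measurable fun z : EuclideanSpace ℝ (Fin d) × ℝ => ((φ z.2)⁻¹, z.1) :=
      ((hφmeas.comp measurable_snd).inv.prodMk measurable_fst)
    exact (continuous_smul.measurable).comp h1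
  have hFmeas : Measurable F := by
    apply Measurable.mul
    · exact hGmeas.comp hsm
    · exact ((hgmeas.comp measurable_snd).mul (hw₁meas.comp measurable_snd))
  -- fibers
  have hfib : ∀ t ∈ Sset, (fun x => A.indicator F (x, t)) =
      (closedBall (0 : EuclideanSpace ℝ (Fin d)) (φ t)).indicator (fun x => F (x, t)) := by
    intro t ht
    funext x
    by_cases hx : x ∈ closedBall (0 : EuclideanSpace ℝ (Fin d)) (φ t)
    · rw [Set.indicator_of_mem hx]
      rw [Set.indicator_of_mem]
      exact ⟨ht, by simpa [mem_closedBall, dist_zero_right] using hx⟩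
    · rw [Set.indicator_of_notMem hx, Set.indicator_of_notMem]
      intro hz
      exact hx (by simpa [mem_closedBall, dist_zero_right] using hz.2)
  have hfib0 : ∀ t ∉ Sset, (fun x => A.indicator F (x, t)) = fun _ => (0:ℝ) := by
    intro t ht
    funext x
    exact Set.indicator_of_notMem (fun hz => ht hz.1) F
  have hball0 : volume (closedBall (0 : EuclideanSpace ℝ (Fin d)) (0:ℝ)) = 0 := by
    rw [Measure.addHaar_closedBall volume (0:EuclideanSpace ℝ (Fin d)) le_rfl]
    rw [finrank_euclideanSpace_fin]
    rw [zero_pow (by omega : d ≠ 0)]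
    simp
  -- integrability
  have hInt : Integrable (A.indicator F)
      ((volume : Measure (EuclideanSpace ℝ (Fin d))).prod (volume : Measure ℝ)) := by
    rw [integrable_prod_iff' ((hFmeas.indicator hA).aestronglyMeasurable)]
    constructor
    · refine Filter.Eventually.of_forall fun t => ?_
      by_cases ht : t ∈ Sset
      · rw [show (fun x => A.indicator F (x, t)) = _ from hfib t ht]
        refine IntegrableOn.integrable_indicator ?_ measurableSet_closedBall
        rcases eq_or_lt_of_le (hφ0 t ht) with h0 | hpos
        · rw [IntegrableOn, Measure.restrict_eq_zero.2 (by rw [← h0]; exact hball0)]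
          exact integrable_zero_measure
        · have := bob_scaleInt (G := fun u => G u * (g t * w₁ t)) (hGint.mul_const _) hpos
          exact this
      · rw [hfib0 t ht]
        exact integrable_zero _ _ _
    · have hnorm : (fun t => ∫ x, ‖A.indicator F (x, t)‖ ∂volume) =
          Sset.indicator (fun t =>
            ((∫ u in closedBall (0 : EuclideanSpace ℝ (Fin d)) 1, |G u|) * |g t|) *
              ((φ t) ^ d * w₁ t)) := by
        funext t
        by_cases ht : t ∈ Sset
        · have h1 : (fun x => ‖A.indicator F (x, t)‖) =
              (closedBall (0 : EuclideanSpace ℝ (Fin d)) (φ t)).indicator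
                (fun x => ‖F (x, t)‖) := by
            funext x
            rw [show A.indicator F (x, t) = _ from congrFun (hfib t ht) x]
            exact norm_indicator_eq_indicator_norm _ _
          rw [h1, integral_indicator measurableSet_closedBall,
            Set.indicator_of_mem ht]
          rcases eq_or_lt_of_le (hφ0 t ht) with h0 | hpos
          · rw [← h0]
            have hz : (volume : Measure (EuclideanSpace ℝ (Fin d))).restrict
                (closedBall 0 0) = 0 := Measure.restrict_eq_zero.2 hball0
            rw [hz, integral_zero_measure, zero_pow (by omega : d ≠ 0)]
            ring
          · have h2 : (fun x => ‖F (x, t)‖) =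
                fun x => (fun u => |G u|) ((φ t)⁻¹ • x) * (|g t| * w₁ t) := by
              funext x
              simp only [hFdef, Real.norm_eq_abs, abs_mul]
              rw [abs_of_nonneg (hw₁0 t ht)]
            rw [h2, integral_mul_const, bob_scale (fun u => |G u|) hpos]
            ring
        · have hzz : ∀ x : EuclideanSpace ℝ (Fin d), A.indicator F (x, t) = 0 :=
            fun x => congrFun (hfib0 t ht) x
          rw [Set.indicator_of_notMem ht]
          simp only [hzz, norm_zero]
          exact integral_zero _ _
      rw [hnorm]
      refine IntegrableOn.integrable_indicator ?_ hSmeas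
      refine bob_intS d Sset hSmeas φ w₁ hw₁0 hφ0 hmom _ ?_ hφmeas hw₁meas
        ((∫ u in closedBall (0 : EuclideanSpace ℝ (Fin d)) 1, |G u|) * C) M ?_
      · exact hgmeas.abs.const_mul _
      · intro t ht
        set CA : ℝ := ∫ u in closedBall (0 : EuclideanSpace ℝ (Fin d)) 1, |G u| with hCAdef
        have hCA0 : 0 ≤ CA := integral_nonneg fun u => abs_nonneg _
        rw [abs_mul, abs_abs, abs_of_nonneg hCA0]
        calc CA * |g t| ≤ CA * (C * (1 + |t|) ^ M) :=
            mul_le_mul_of_nonneg_left (hb t ht) hCA0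
          _ = (CA * C) * (1 + |t|) ^ M := by ring
  -- main computation
  have inner : ∀ t : ℝ, (∫ x, A.indicator F (x, t) ∂volume) =
      Sset.indicator (fun t =>
        (∫ u in closedBall (0 : EuclideanSpace ℝ (Fin d)) 1, G u) *
          (g t * ((φ t) ^ d * w₁ t))) t := by
    intro t
    by_cases ht : t ∈ Sset
    · rw [show (fun x => A.indicator F (x, t)) = _ from hfib t ht,
        integral_indicator measurableSet_closedBall, Set.indicator_of_mem ht]
      rcases eq_or_lt_of_le (hφ0 t ht) with h0 | hpos
      · rw [← h0]
        have hz : (volume : Measure (EuclideanSpace ℝ (Fin d))).restrict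
            (closedBall 0 0) = 0 := Measure.restrict_eq_zero.2 hball0
        rw [hz, integral_zero_measure, zero_pow (by omega : d ≠ 0)]
        ring
      · have h2 : (fun x : EuclideanSpace ℝ (Fin d) => F (x, t)) =
            (fun x => G ((φ t)⁻¹ • x) * (g t * w₁ t)) := rfl
        rw [h2, integral_mul_const, bob_scale G hpos]
        ring
    · rw [hfib0 t ht, Set.indicator_of_notMem ht]
      simp
  rw [← integral_indicator hA]
  rw [Measure.volume_eq_prod]
  rw [integral_prod_symm _ hInt]
  calc (∫ t : ℝ, ∫ x, A.indicator F (x, t) ∂volume) =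
      ∫ t : ℝ, Sset.indicator (fun t =>
        (∫ u in closedBall (0 : EuclideanSpace ℝ (Fin d)) 1, G u) *
          (g t * ((φ t) ^ d * w₁ t))) t :=
        integral_congr_ae (Filter.Eventually.of_forall inner)
    _ = ∫ t in Sset, (∫ u in closedBall (0 : EuclideanSpace ℝ (Fin d)) 1, G u) *
          (g t * ((φ t) ^ d * w₁ t)) :=
        integral_indicator hSmeas
    _ = (∫ u in closedBall (0 : EuclideanSpace ℝ (Fin d)) 1, G u) *
          ∫ t in Sset, g t * ((φ t) ^ d * w₁ t) :=
        integral_const_mul _ _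

def bob_toMv {d : ℕ} (p : Polynomial ℝ) : MvPolynomial (Fin (d+1)) ℝ :=
  Polynomial.eval₂ MvPolynomial.C (MvPolynomial.X (Fin.last d)) p

lemma bob_toMv_eval {d : ℕ} (p : Polynomial ℝ) (v : Fin (d+1) → ℝ) :
    MvPolynomial.eval v (bob_toMv (d := d) p) = p.eval (v (Fin.last d)) := by
  rw [bob_toMv, Polynomial.hom_eval₂]
  have h1 : (MvPolynomial.eval v).comp (MvPolynomial.C (σ := Fin (d+1))) = RingHom.id ℝ := by
    ext r
    simp
  rw [h1]
  simp [MvPolynomial.eval_X, Polynomial.eval₂_id]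

lemma bob_toMv_totalDegree {d : ℕ} (p : Polynomial ℝ) :
    (bob_toMv (d := d) p).totalDegree ≤ p.natDegree := by
  rw [bob_toMv, Polynomial.eval₂_eq_sum_range]
  refine (MvPolynomial.totalDegree_finset_sum _ _).trans ?_
  refine Finset.sup_le fun i hi => ?_
  refine (MvPolynomial.totalDegree_mul _ _).trans ?_
  have h1 : (MvPolynomial.C (σ := Fin (d+1)) (p.coeff i)).totalDegree = 0 :=
    MvPolynomial.totalDegree_C _
  have h2 : ((MvPolynomial.X (Fin.last d) : MvPolynomial (Fin (d+1)) ℝ) ^ i).totalDegree ≤ i := by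
    refine (MvPolynomial.totalDegree_pow _ _).trans ?_
    simp [MvPolynomial.totalDegree_X]
  rw [h1]
  simp only [zero_add]
  exact h2.trans (by have := Finset.mem_range.1 hi; omega)

lemma bob_polyConstruct {d : ℕ} (p₂ : Polynomial ℝ) (hp₂deg : p₂.natDegree ≤ 2)
    (P : MvPolynomial (Fin d) ℝ) (m : ℕ) (hPdeg : P.totalDegree ≤ m)
    (hPpar : ∀ β ∈ P.support, (∑ i, β i) % 2 = m % 2)
    (qp : Polynomial ℝ) (n : ℕ) (hq : qp.natDegree ≤ n - m) (hmn : m ≤ n) :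
    ∃ Q : MvPolynomial (Fin (d + 1)) ℝ, Q.totalDegree ≤ n ∧
      ∀ (x : Fin d → ℝ) (t : ℝ) (φt : ℝ), 0 < φt → φt ^ 2 = p₂.eval t →
        MvPolynomial.eval (Fin.snoc x t) Q =
          qp.eval t * φt ^ m * MvPolynomial.eval (fun i => φt⁻¹ * x i) P := by
  classical
  refine ⟨∑ β ∈ P.support, MvPolynomial.rename Fin.castSucc
      (MvPolynomial.monomial β (MvPolynomial.coeff β P)) * bob_toMv qp *
      (bob_toMv p₂) ^ ((m - β.sum fun _ e => e) / 2), ?_, ?_⟩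
  · refine (MvPolynomial.totalDegree_finset_sum _ _).trans ?_
    refine Finset.sup_le fun β hβ => ?_
    have hβm : (β.sum fun _ e => e) ≤ m := (MvPolynomial.le_totalDegree hβ).trans hPdeg
    have hβpar : (β.sum fun _ e => e) % 2 = m % 2 := by
      have := hPpar β hβ
      rwa [show (∑ i, β i) = β.sum fun _ e => e from
        (Finsupp.sum_fintype β (fun _ e => e) (fun i => rfl)).symm] at this
    refine (MvPolynomial.totalDegree_mul _ _).trans ?_
    have h1 : (MvPolynomial.rename Fin.castSucc
        (MvPolynomial.monomial β (MvPolynomial.coeff β P))).totalDegree ≤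
        β.sum fun _ e => e := by
      rw [MvPolynomial.rename_monomial]
      refine (MvPolynomial.totalDegree_monomial_le _ _).trans ?_
      rw [Finsupp.sum_mapDomain_index (fun _ => rfl) (fun _ _ _ => rfl)]
      exact le_rfl
    have h2 : ((bob_toMv (d := d) p₂) ^ ((m - β.sum fun _ e => e) / 2)).totalDegree ≤
        m - β.sum fun _ e => e := by
      refine (MvPolynomial.totalDegree_pow _ _).trans ?_
      have := bob_toMv_totalDegree (d := d) p₂
      calc (m - β.sum fun _ e => e) / 2 * (bob_toMv (d := d) p₂).totalDegree ≤
          (m - β.sum fun _ e => e) / 2 * 2 :=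
            Nat.mul_le_mul_left _ (this.trans hp₂deg)
        _ ≤ m - β.sum fun _ e => e := by omega
    calc (MvPolynomial.rename Fin.castSucc
          (MvPolynomial.monomial β (MvPolynomial.coeff β P)) * bob_toMv qp).totalDegree +
          ((bob_toMv (d := d) p₂) ^ ((m - β.sum fun _ e => e) / 2)).totalDegree ≤
        ((MvPolynomial.rename Fin.castSucc
          (MvPolynomial.monomial β (MvPolynomial.coeff β P))).totalDegree +
          (bob_toMv (d := d) qp).totalDegree) +
          ((bob_toMv (d := d) p₂) ^ ((m - β.sum fun _ e => e) / 2)).totalDegree :=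
          Nat.add_le_add_right (MvPolynomial.totalDegree_mul _ _) _
      _ ≤ ((β.sum fun _ e => e) + (n - m)) + (m - β.sum fun _ e => e) :=
          Nat.add_le_add (Nat.add_le_add h1 ((bob_toMv_totalDegree qp).trans hq)) h2
      _ ≤ n := by omega
  · intro x t φt hφt hφt2
    rw [map_sum]
    have hev : ∀ β ∈ P.support,
        MvPolynomial.eval (Fin.snoc x t) (MvPolynomial.rename Fin.castSucc
          (MvPolynomial.monomial β (MvPolynomial.coeff β P)) * bob_toMv qp *
          (bob_toMv p₂) ^ ((m - β.sum fun _ e => e) / 2)) =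
        (MvPolynomial.coeff β P * ∏ i, x i ^ β i) * qp.eval t *
          φt ^ (m - β.sum fun _ e => e) := by
      intro β hβ
      have hβm : (β.sum fun _ e => e) ≤ m := (MvPolynomial.le_totalDegree hβ).trans hPdeg
      have hβpar : (β.sum fun _ e => e) % 2 = m % 2 := by
        have := hPpar β hβ
        rwa [show (∑ i, β i) = β.sum fun _ e => e from
          (Finsupp.sum_fintype β (fun _ e => e) (fun i => rfl)).symm] at this
      rw [map_mul, map_mul, MvPolynomial.eval_rename, bob_toMv_eval, map_pow, bob_toMv_eval]
      rw [Fin.snoc_last]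
      have hcomp : (Fin.snoc x t : Fin (d+1) → ℝ) ∘ Fin.castSucc = x := by
        funext i
        simp [Fin.snoc_castSucc]
      rw [hcomp]
      rw [MvPolynomial.eval_monomial]
      rw [← hφt2, ← pow_mul]
      have : 2 * ((m - β.sum fun _ e => e) / 2) = m - β.sum fun _ e => e := by omega
      rw [this]
      have hprod : (β.prod fun n e => x n ^ e) = ∏ i, x i ^ β i :=
        Finsupp.prod_fintype _ _ fun i => pow_zero _
      rw [hprod]
    rw [Finset.sum_congr rfl hev]
    rw [MvPolynomial.eval_eq']
    rw [Finset.mul_sum]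
    refine Finset.sum_congr rfl fun β hβ => ?_
    have hβm : (β.sum fun _ e => e) ≤ m := (MvPolynomial.le_totalDegree hβ).trans hPdeg
    have hβm' : (∑ i, β i) ≤ m := by
      rwa [show (∑ i, β i) = β.sum fun _ e => e from
        (Finsupp.sum_fintype β (fun _ e => e) (fun i => rfl)).symm]
    have hp : ∏ i, (φt⁻¹ * x i) ^ β i = (φt ^ (∑ i, β i))⁻¹ * ∏ i, x i ^ β i := by
      simp only [mul_pow, Finset.prod_mul_distrib]
      rw [Finset.prod_pow_eq_pow_sum, inv_pow]
    rw [hp]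
    have hsum : (β.sum fun _ e => e) = ∑ i, β i :=
      (Finsupp.sum_fintype β (fun _ e => e) (fun i => rfl))
    rw [hsum]
    have hpow : φt ^ (m - ∑ i, β i) = φt ^ m * (φt ^ (∑ i, β i))⁻¹ := by
      rw [← pow_sub₀ _ hφt.ne' hβm']
    rw [hpow]
    ring

/-- Orthogonal polynomials inside a quadratic body of revolution:
`Q_{m,k}^n(x,t) = q_{n−m}^{[m]}(t) φ(t)^m P_k^m(x/φ(t))` is a polynomial of total degree
at most `n`, and `⟨Q_{m,k}^n, Q_{m',k'}^{n'}⟩_W = h_m^n δ_{n,n'} δ_{m,m'} δ_{k,k'}` with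
`h_m^n = b_W ∫_S (q_{n−m}^{[m]})² φ^{2m+d} w₁ dt > 0`. -/
theorem body_orthogonal_basis
    (d : ℕ) (hd : 2 ≤ d)
    (Sset : Set ℝ) (hSopen : IsOpen Sset)
    (φ : ℝ → ℝ) (hφmeas : Measurable φ) (hφ0 : ∀ t ∈ Sset, 0 ≤ φ t)
    (hφ : (∃ c1 c0 : ℝ, ∀ t ∈ Sset, φ t = c1 * t + c0) ∨
      (∃ c2 c1 c0 : ℝ, (∀ t ∈ Sset, 0 ≤ c2 * t ^ 2 + c1 * t + c0) ∧
        ∀ t ∈ Sset, φ t = Real.sqrt (c2 * t ^ 2 + c1 * t + c0)))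
    (w₁ : ℝ → ℝ) (hw₁meas : Measurable w₁) (hw₁0 : ∀ t ∈ Sset, 0 ≤ w₁ t)
    (hmom : ∀ k : ℕ, IntegrableOn (fun t => |t| ^ k * (φ t) ^ d * w₁ t) Sset)
    (w₂ : EuclideanSpace ℝ (Fin d) → ℝ) (hw₂meas : Measurable w₂)
    (hw₂0 : ∀ u ∈ Metric.closedBall (0 : EuclideanSpace ℝ (Fin d)) 1, 0 ≤ w₂ u)
    (hw₂sym : ∀ u : EuclideanSpace ℝ (Fin d), w₂ (-u) = w₂ u)
    (hw₂int : ∫ u in Metric.closedBall (0 : EuclideanSpace ℝ (Fin d)) 1, w₂ u = 1)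
    -- an orthonormal basis `{P_k^m : |k| = m}` of orthogonal polynomials on the ball
    (Pb : ℕ → (Fin d → ℕ) → MvPolynomial (Fin d) ℝ)
    (hPdeg : ∀ m (k : Fin d → ℕ), (∑ i, k i) = m → (Pb m k).totalDegree = m)
    (hPlow : ∀ m (k : Fin d → ℕ), (∑ i, k i) = m →
      ∀ Q : MvPolynomial (Fin d) ℝ, Q.totalDegree < m →
        ∫ u in Metric.closedBall (0 : EuclideanSpace ℝ (Fin d)) 1,
          MvPolynomial.eval u (Pb m k) * MvPolynomial.eval u Q * w₂ u = 0)
    (hPorth : ∀ m (k k' : Fin d → ℕ), (∑ i, k i) = m → (∑ i, k' i) = m →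
      ∫ u in Metric.closedBall (0 : EuclideanSpace ℝ (Fin d)) 1,
        MvPolynomial.eval u (Pb m k) * MvPolynomial.eval u (Pb m k') * w₂ u =
        if k = k' then 1 else 0)
    -- each `P_k^m` is a sum of monomials of degree `≡ m (mod 2)`
    (hPpar : ∀ m (k : Fin d → ℕ), (∑ i, k i) = m →
      ∀ β ∈ (Pb m k).support, (∑ i, β i) % 2 = m % 2)
    -- the orthogonal polynomials `q_j^{[m]}` with respect to `φ(t)^{2m+d} w₁(t)` on `S`
    (q : ℕ → ℕ → Polynomial ℝ)
    (hqdeg : ∀ m j, (q m j).degree = j)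
    (hqorth : ∀ m j k, k < j →
      ∫ t in Sset, (q m j).eval t * t ^ k * (φ t) ^ (2 * m + d) * w₁ t = 0)
    -- the normalization constant `b_W`, with `⟨1,1⟩_W = 1`
    (bW : ℝ)
    (hbW : bW * ∫ z in quadBody d Sset φ,
        w₁ z.2 * w₂ ((φ z.2)⁻¹ • z.1) ∂volume = 1) :
    ∀ n m : ℕ, ∀ k : Fin d → ℕ, m ≤ n → (∑ i, k i) = m →
      -- `Q_{m,k}^n` is a polynomial of total degree at most `n`
      (∃ Q : MvPolynomial (Fin (d + 1)) ℝ, Q.totalDegree ≤ n ∧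
        ∀ (x : EuclideanSpace ℝ (Fin d)) (t : ℝ), t ∈ Sset → 0 < φ t →
          MvPolynomial.eval (Fin.snoc (x : Fin d → ℝ) t) Q =
            (q m (n - m)).eval t * (φ t) ^ m *
              MvPolynomial.eval ((φ t)⁻¹ • x) (Pb m k)) ∧
      -- `h_m^n > 0`
      (0 < bW * ∫ t in Sset, ((q m (n - m)).eval t) ^ 2 * (φ t) ^ (2 * m + d) * w₁ t) ∧
      -- orthogonality
      (∀ n' m' : ℕ, ∀ k' : Fin d → ℕ, m' ≤ n' → (∑ i, k' i) = m' →
        bW * ∫ z in quadBody d Sset φ,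
            ((q m (n - m)).eval z.2 * (φ z.2) ^ m *
              MvPolynomial.eval ((φ z.2)⁻¹ • z.1) (Pb m k)) *
            ((q m' (n' - m')).eval z.2 * (φ z.2) ^ m' *
              MvPolynomial.eval ((φ z.2)⁻¹ • z.1) (Pb m' k')) *
            (w₁ z.2 * w₂ ((φ z.2)⁻¹ • z.1)) ∂volume =
          if n = n' ∧ m = m' ∧ k = k' then
            bW * ∫ t in Sset, ((q m (n - m)).eval t) ^ 2 * (φ t) ^ (2 * m + d) * w₁ t
          else 0) := by
  have hd1 : 1 ≤ d := by omega
  have hSmeas : MeasurableSet Sset := hSopen.measurableSet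
  obtain ⟨p₂, hp₂deg, hp₂⟩ : ∃ p₂ : Polynomial ℝ, p₂.natDegree ≤ 2 ∧
      ∀ t ∈ Sset, φ t ^ 2 = p₂.eval t := by
    rcases hφ with ⟨c1, c0, hlin⟩ | ⟨c2, c1, c0, hnn, hsq⟩
    · refine ⟨(Polynomial.C c1 * Polynomial.X + Polynomial.C c0) ^ 2, ?_, fun t ht => ?_⟩
      · refine (Polynomial.natDegree_pow _ _).le.trans ?_
        have := Polynomial.natDegree_linear_le (a := c1) (b := c0)
        omega
      · rw [hlin t ht]
        simp
    · refine ⟨Polynomial.C c2 * Polynomial.X ^ 2 + Polynomial.C c1 * Polynomial.X +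
        Polynomial.C c0, Polynomial.natDegree_quadratic_le, fun t ht => ?_⟩
      rw [hsq t ht, Real.sq_sqrt (hnn t ht)]
      simp
  obtain ⟨Cφ, hCφ0, hCφ⟩ : ∃ Cφ : ℝ, 0 ≤ Cφ ∧ ∀ t ∈ Sset, φ t ≤ Cφ * (1 + |t|) := by
    obtain ⟨C2, hC20, hC2⟩ := bob_polyBound p₂ 2 hp₂deg
    refine ⟨Real.sqrt C2, Real.sqrt_nonneg _, fun t ht => ?_⟩
    have h1 : (0:ℝ) < 1 + |t| := by have := abs_nonneg t; linarith
    have h2 : φ t ^ 2 ≤ (Real.sqrt C2 * (1 + |t|)) ^ 2 := by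
      rw [mul_pow, Real.sq_sqrt hC20]
      calc φ t ^ 2 = p₂.eval t := hp₂ t ht
        _ ≤ |p₂.eval t| := le_abs_self _
        _ ≤ C2 * (1 + |t|) ^ 2 := hC2 t
    have h3 : 0 ≤ Real.sqrt C2 * (1 + |t|) := mul_nonneg (Real.sqrt_nonneg _) h1.le
    nlinarith [hφ0 t ht]
  have h1t : ∀ t : ℝ, (0:ℝ) ≤ 1 + |t| := fun t => by have := abs_nonneg t; linarith
  have hφpow : ∀ (j : ℕ) (t : ℝ), t ∈ Sset → φ t ^ j ≤ Cφ ^ j * (1 + |t|) ^ j := by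
    intro j t ht
    rw [← mul_pow]
    exact pow_le_pow_left₀ (hφ0 t ht) (hCφ t ht) j
  have hw₂I : IntegrableOn w₂ (Metric.closedBall (0 : EuclideanSpace ℝ (Fin d)) 1) := by
    by_contra h
    rw [integral_undef h] at hw₂int
    exact one_ne_zero hw₂int.symm
  have hqnat : ∀ m' j, (q m' j).natDegree = j := fun m' j =>
    Polynomial.natDegree_eq_of_degree_eq_some (hqdeg m' j)
  have hqne : ∀ m' j, q m' j ≠ 0 := by
    intro m' j h
    have := hqdeg m' j
    rw [h, Polynomial.degree_zero] at this
    exact (WithBot.bot_ne_coe (a := j)) this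
  -- integrability of two-polynomial products against the weight
  have hqqint2 : ∀ (p p' : Polynomial ℝ) (mm : ℕ),
      IntegrableOn (fun t => p.eval t * p'.eval t * φ t ^ (2 * mm) *
        ((φ t) ^ d * w₁ t)) Sset := by
    intro p p' mm
    obtain ⟨Ca, hCa0, hCa⟩ := bob_polyBound p p.natDegree le_rfl
    obtain ⟨Cb, hCb0, hCb⟩ := bob_polyBound p' p'.natDegree le_rfl
    have hmeas : Measurable fun t => p.eval t * p'.eval t * φ t ^ (2 * mm) :=
      ((p.continuous.measurable.mul p'.continuous.measurable)).mul (hφmeas.pow_const _)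
    refine (bob_intS d Sset hSmeas φ w₁ hw₁0 hφ0 hmom _ hmeas hφmeas hw₁meas
      (Ca * Cb * Cφ ^ (2 * mm)) (p.natDegree + p'.natDegree + 2 * mm) ?_).congr_fun
      (fun t ht => rfl) hSmeas
    intro t ht
    rw [abs_mul, abs_mul, abs_pow, abs_of_nonneg (hφ0 t ht)]
    calc |p.eval t| * |p'.eval t| * φ t ^ (2 * mm)
        ≤ (Ca * (1 + |t|) ^ p.natDegree) * (Cb * (1 + |t|) ^ p'.natDegree) *
          (Cφ ^ (2 * mm) * (1 + |t|) ^ (2 * mm)) := by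
          refine mul_le_mul (mul_le_mul (hCa t) (hCb t) (abs_nonneg _)
            (mul_nonneg hCa0 (pow_nonneg (h1t t) _))) (hφpow _ t ht)
            (pow_nonneg (hφ0 t ht) _)
            (mul_nonneg (mul_nonneg hCa0 (pow_nonneg (h1t t) _))
              (mul_nonneg hCb0 (pow_nonneg (h1t t) _)))
      _ = Ca * Cb * Cφ ^ (2 * mm) * (1 + |t|) ^ (p.natDegree + p'.natDegree + 2 * mm) := by
          rw [pow_add, pow_add]
          ring
  have hqqint : ∀ (a b mm jj : ℕ),
      IntegrableOn (fun t => (q a b).eval t * t ^ jj * φ t ^ (2 * mm) *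
        ((φ t) ^ d * w₁ t)) Sset := by
    intro a b mm jj
    have := hqqint2 (q a b) (Polynomial.X ^ jj) mm
    refine this.congr_fun (fun t ht => ?_) hSmeas
    simp [Polynomial.eval_pow]
  have horthq : ∀ (mm a b : ℕ), b < a →
      ∫ t in Sset, (q mm a).eval t * (q mm b).eval t * φ t ^ (2 * mm + d) * w₁ t = 0 := by
    intro mm a b hba
    have hrw : (fun t => (q mm a).eval t * (q mm b).eval t * φ t ^ (2 * mm + d) * w₁ t) =
        fun t => ∑ j ∈ Finset.range ((q mm b).natDegree + 1),
          (q mm b).coeff j * ((q mm a).eval t * t ^ j * φ t ^ (2 * mm + d) * w₁ t) := by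
      funext t
      nth_rewrite 2 [Polynomial.eval_eq_sum_range]
      rw [Finset.mul_sum, Finset.sum_mul, Finset.sum_mul]
      exact Finset.sum_congr rfl fun j _ => by ring
    rw [hrw, integral_finset_sum]
    · refine Finset.sum_eq_zero fun j hj => ?_
      rw [integral_const_mul]
      have hj' : j < a := by
        have := Finset.mem_range.1 hj
        rw [hqnat mm b] at this
        omega
      rw [hqorth mm a j hj', mul_zero]
    · intro j hj
      refine IntegrableOn.congr_fun ((hqqint mm a mm j).const_mul ((q mm b).coeff j))
        (fun t ht => ?_) hSmeas
      simp only [pow_add]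
      ring
  have hquadmeas : MeasurableSet (quadBody d Sset φ) := by
    apply MeasurableSet.inter
    · exact hSmeas.preimage measurable_snd
    · exact measurableSet_le (measurable_fst.norm) (hφmeas.comp measurable_snd)
  have hIeq : (∫ z in quadBody d Sset φ,
      w₁ z.2 * w₂ ((φ z.2)⁻¹ • z.1) ∂volume) = ∫ t in Sset, 1 * ((φ t) ^ d * w₁ t) := by
    have hkey : (∫ z in quadBody d Sset φ,
        w₂ ((φ z.2)⁻¹ • z.1) * ((1:ℝ) * w₁ z.2) ∂volume) =
        (∫ u in Metric.closedBall (0 : EuclideanSpace ℝ (Fin d)) 1, w₂ u) *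
          ∫ t in Sset, 1 * ((φ t) ^ d * w₁ t) :=
      bob_keyFubini d hd1 Sset hSmeas φ hφmeas hφ0 w₁ hw₁meas hw₁0 hmom
        w₂ hw₂meas hw₂I (fun _ => (1:ℝ)) measurable_const 1 0 (fun t ht => by simp)
    rw [hw₂int, one_mul] at hkey
    rw [← hkey]
    exact integral_congr_ae (Filter.Eventually.of_forall fun z => by ring)
  have hInonneg : 0 ≤ ∫ z in quadBody d Sset φ,
      w₁ z.2 * w₂ ((φ z.2)⁻¹ • z.1) ∂volume := by
    refine setIntegral_nonneg hquadmeas fun z hz => ?_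
    obtain ⟨hzS, hzn⟩ := hz
    refine mul_nonneg (hw₁0 _ hzS) (hw₂0 _ ?_)
    rcases eq_or_lt_of_le (hφ0 _ hzS) with h0 | hpos
    · have hz1 : z.1 = 0 := by
        have h : ‖z.1‖ ≤ 0 := by rw [h0]; exact hzn
        exact norm_le_zero_iff.1 h
      rw [hz1, smul_zero]
      simp
    · rw [Metric.mem_closedBall, dist_zero_right, norm_smul, norm_inv, Real.norm_eq_abs,
        abs_of_pos hpos, inv_mul_le_iff₀ hpos, mul_one]
      exact hzn
  have hIpos : 0 < ∫ z in quadBody d Sset φ,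
      w₁ z.2 * w₂ ((φ z.2)⁻¹ • z.1) ∂volume := by
    rcases eq_or_lt_of_le hInonneg with h0 | h
    · exfalso
      rw [← h0, mul_zero] at hbW
      exact zero_ne_one hbW
    · exact h
  have hbWpos : 0 < bW := by nlinarith [hIpos, hbW]
  have hSIpos : 0 < ∫ t in Sset, 1 * ((φ t) ^ d * w₁ t) := hIeq ▸ hIpos
  have hg0int : IntegrableOn (fun t => 1 * ((φ t) ^ d * w₁ t)) Sset :=
    bob_intS d Sset hSmeas φ w₁ hw₁0 hφ0 hmom (fun _ => 1) measurable_const hφmeas hw₁meas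
      1 0 (fun t ht => by simp)
  have hg0nn : (0 : ℝ → ℝ) ≤ᶠ[MeasureTheory.ae (volume.restrict Sset)]
      fun t => 1 * ((φ t) ^ d * w₁ t) := by
    have : ∀ᵐ t ∂(volume.restrict Sset), 0 ≤ 1 * ((φ t) ^ d * w₁ t) :=
      (ae_restrict_iff' hSmeas).2 (Filter.Eventually.of_forall fun t ht => by
        rw [one_mul]
        exact mul_nonneg (pow_nonneg (hφ0 t ht) d) (hw₁0 t ht))
    exact this
  have hTpos : 0 < volume (Function.support (fun t => 1 * ((φ t) ^ d * w₁ t)) ∩ Sset) :=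
    (setIntegral_pos_iff_support_of_nonneg_ae hg0nn hg0int).1 hSIpos
  intro n m k hmn hk
  refine ⟨?_, ?_, ?_⟩
  · -- polynomiality
    obtain ⟨Q, hQdeg, hQev⟩ := bob_polyConstruct p₂ hp₂deg (Pb m k) m
      (le_of_eq (hPdeg m k hk)) (hPpar m k hk) (q m (n - m)) n
      (le_of_eq (hqnat m (n - m))) hmn
    refine ⟨Q, hQdeg, fun x t ht hpos => ?_⟩
    rw [hQev x t (φ t) hpos (hp₂ t ht)]
    rfl
  · -- positivity of h_m^n
    refine mul_pos hbWpos ?_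
    have hfint : IntegrableOn
        (fun t => ((q m (n - m)).eval t) ^ 2 * (φ t) ^ (2 * m + d) * w₁ t) Sset := by
      refine (hqqint2 (q m (n - m)) (q m (n - m)) m).congr_fun (fun t ht => ?_) hSmeas
      simp only [pow_add, pow_two]
      ring
    have hfnn : (0 : ℝ → ℝ) ≤ᶠ[MeasureTheory.ae (volume.restrict Sset)]
        fun t => ((q m (n - m)).eval t) ^ 2 * (φ t) ^ (2 * m + d) * w₁ t := by
      have : ∀ᵐ t ∂(volume.restrict Sset),
          0 ≤ ((q m (n - m)).eval t) ^ 2 * (φ t) ^ (2 * m + d) * w₁ t :=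
        (ae_restrict_iff' hSmeas).2 (Filter.Eventually.of_forall fun t ht =>
          mul_nonneg (mul_nonneg (sq_nonneg _) (pow_nonneg (hφ0 t ht) _)) (hw₁0 t ht))
      exact this
    rw [setIntegral_pos_iff_support_of_nonneg_ae hfnn hfint]
    have hZ0 : volume {t : ℝ | (q m (n - m)).eval t = 0} = 0 :=
      (Polynomial.finite_setOf_isRoot (hqne m (n - m))).measure_zero _
    have hsub : (Function.support (fun t => 1 * ((φ t) ^ d * w₁ t)) ∩ Sset) \
        {t : ℝ | (q m (n - m)).eval t = 0} ⊆
        Function.support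
          (fun t => ((q m (n - m)).eval t) ^ 2 * (φ t) ^ (2 * m + d) * w₁ t) ∩ Sset := by
      rintro t ⟨⟨hts, htS⟩, htZ⟩
      refine ⟨?_, htS⟩
      simp only [Function.mem_support] at hts ⊢
      rw [one_mul] at hts
      have hφne : φ t ≠ 0 := by
        intro h
        exact hts (by rw [h, zero_pow (by omega : d ≠ 0), zero_mul])
      have hw₁ne : w₁ t ≠ 0 := fun h => hts (by rw [h, mul_zero])
      have hqne' : (q m (n - m)).eval t ≠ 0 := htZ
      exact mul_ne_zero (mul_ne_zero (pow_ne_zero _ hqne') (pow_ne_zero _ hφne)) hw₁ne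
    calc (0:ENNReal) < volume (Function.support (fun t => 1 * ((φ t) ^ d * w₁ t)) ∩ Sset) :=
        hTpos
      _ = volume ((Function.support (fun t => 1 * ((φ t) ^ d * w₁ t)) ∩ Sset) \
          {t : ℝ | (q m (n - m)).eval t = 0}) := (measure_diff_null hZ0).symm
      _ ≤ _ := measure_mono hsub
  · -- orthogonality
    intro n' m' k' hmn' hk'
    have hGmeas : Measurable fun u : EuclideanSpace ℝ (Fin d) =>
        MvPolynomial.eval u (Pb m k) * MvPolynomial.eval u (Pb m' k') * w₂ u :=
      (((MvPolynomial.continuous_eval (Pb m k)).comp (PiLp.continuous_ofLp 2 _)).measurable.mul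
        ((MvPolynomial.continuous_eval (Pb m' k')).comp (PiLp.continuous_ofLp 2 _)).measurable).mul hw₂meas
    have hcont : Continuous fun u : EuclideanSpace ℝ (Fin d) =>
        MvPolynomial.eval u (Pb m k) * MvPolynomial.eval u (Pb m' k') :=
      ((MvPolynomial.continuous_eval (Pb m k)).comp (PiLp.continuous_ofLp 2 _)).mul
        ((MvPolynomial.continuous_eval (Pb m' k')).comp (PiLp.continuous_ofLp 2 _))
    obtain ⟨Cb, hCb⟩ := (isCompact_closedBall (0 : EuclideanSpace ℝ (Fin d)) 1
      ).exists_bound_of_continuousOn hcont.continuousOn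
    have hGint : IntegrableOn (fun u : EuclideanSpace ℝ (Fin d) =>
        MvPolynomial.eval u (Pb m k) * MvPolynomial.eval u (Pb m' k') * w₂ u)
        (Metric.closedBall (0 : EuclideanSpace ℝ (Fin d)) 1) := by
      refine Integrable.bdd_mul (c := Cb) hw₂I hcont.aestronglyMeasurable ?_
      exact (ae_restrict_iff' measurableSet_closedBall).2
        (Filter.Eventually.of_forall fun u hu => hCb u hu)
    have hgmeas : Measurable fun t =>
        (q m (n - m)).eval t * (q m' (n' - m')).eval t * φ t ^ (m + m') :=
      (((q m (n - m)).continuous.measurable).mul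
        ((q m' (n' - m')).continuous.measurable)).mul (hφmeas.pow_const _)
    obtain ⟨Ca, hCa0, hCa⟩ := bob_polyBound (q m (n - m)) (q m (n - m)).natDegree le_rfl
    obtain ⟨Cc, hCc0, hCc⟩ := bob_polyBound (q m' (n' - m')) (q m' (n' - m')).natDegree le_rfl
    have hgb : ∀ t ∈ Sset, |(q m (n - m)).eval t * (q m' (n' - m')).eval t * φ t ^ (m + m')| ≤
        (Ca * Cc * Cφ ^ (m + m')) *
          (1 + |t|) ^ ((q m (n - m)).natDegree + ((q m' (n' - m')).natDegree + (m + m'))) := by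
      intro t ht
      rw [abs_mul, abs_mul, abs_pow, abs_of_nonneg (hφ0 t ht)]
      calc |(q m (n - m)).eval t| * |(q m' (n' - m')).eval t| * φ t ^ (m + m')
          ≤ (Ca * (1 + |t|) ^ (q m (n - m)).natDegree) *
            (Cc * (1 + |t|) ^ (q m' (n' - m')).natDegree) *
            (Cφ ^ (m + m') * (1 + |t|) ^ (m + m')) := by
            refine mul_le_mul (mul_le_mul (hCa t) (hCc t) (abs_nonneg _)
              (mul_nonneg hCa0 (pow_nonneg (h1t t) _))) (hφpow _ t ht)
              (pow_nonneg (hφ0 t ht) _)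
              (mul_nonneg (mul_nonneg hCa0 (pow_nonneg (h1t t) _))
                (mul_nonneg hCc0 (pow_nonneg (h1t t) _)))
        _ = Ca * Cc * Cφ ^ (m + m') * (1 + |t|) ^ ((q m (n - m)).natDegree +
            ((q m' (n' - m')).natDegree + (m + m'))) := by
            rw [pow_add, pow_add]
            ring
    have hkey : (∫ z in quadBody d Sset φ,
        (MvPolynomial.eval ((φ z.2)⁻¹ • z.1) (Pb m k) *
          MvPolynomial.eval ((φ z.2)⁻¹ • z.1) (Pb m' k') * w₂ ((φ z.2)⁻¹ • z.1)) *
        (((q m (n - m)).eval z.2 * (q m' (n' - m')).eval z.2 * φ z.2 ^ (m + m')) *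
          w₁ z.2) ∂volume) =
        (∫ u in Metric.closedBall (0 : EuclideanSpace ℝ (Fin d)) 1,
          MvPolynomial.eval u (Pb m k) * MvPolynomial.eval u (Pb m' k') * w₂ u) *
        ∫ t in Sset, ((q m (n - m)).eval t * (q m' (n' - m')).eval t * φ t ^ (m + m')) *
          ((φ t) ^ d * w₁ t) :=
      bob_keyFubini d hd1 Sset hSmeas φ hφmeas hφ0 w₁ hw₁meas hw₁0 hmom
        (fun u => MvPolynomial.eval u (Pb m k) * MvPolynomial.eval u (Pb m' k') * w₂ u)
        hGmeas hGint
        (fun t => (q m (n - m)).eval t * (q m' (n' - m')).eval t * φ t ^ (m + m'))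
        hgmeas _ _ hgb
    have step1 : (∫ z in quadBody d Sset φ,
        ((q m (n - m)).eval z.2 * (φ z.2) ^ m *
          MvPolynomial.eval ((φ z.2)⁻¹ • z.1) (Pb m k)) *
        ((q m' (n' - m')).eval z.2 * (φ z.2) ^ m' *
          MvPolynomial.eval ((φ z.2)⁻¹ • z.1) (Pb m' k')) *
        (w₁ z.2 * w₂ ((φ z.2)⁻¹ • z.1)) ∂volume) =
        (∫ u in Metric.closedBall (0 : EuclideanSpace ℝ (Fin d)) 1,
          MvPolynomial.eval u (Pb m k) * MvPolynomial.eval u (Pb m' k') * w₂ u) *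
        ∫ t in Sset, ((q m (n - m)).eval t * (q m' (n' - m')).eval t * φ t ^ (m + m')) *
          ((φ t) ^ d * w₁ t) := by
      rw [← hkey]
      refine integral_congr_ae (Filter.Eventually.of_forall fun z => ?_)
      simp only [pow_add]
      ring
    rw [step1]
    rcases eq_or_ne m m' with rfl | hmm
    · rcases eq_or_ne k k' with rfl | hkk
      · have hball : (∫ u in Metric.closedBall (0 : EuclideanSpace ℝ (Fin d)) 1,
            MvPolynomial.eval u (Pb m k) * MvPolynomial.eval u (Pb m k) * w₂ u) = 1 := by
          rw [hPorth m k k hk hk, if_pos rfl]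
        rcases eq_or_ne n n' with rfl | hnn
        · rw [hball, one_mul, if_pos ⟨rfl, rfl, rfl⟩]
          congr 1
          refine integral_congr_ae (Filter.Eventually.of_forall fun t => ?_)
          simp only [two_mul, pow_add, pow_two]
          ring
        · rw [hball, one_mul, if_neg (by tauto)]
          have hzero : (∫ t in Sset,
              ((q m (n - m)).eval t * (q m (n' - m)).eval t * φ t ^ (m + m)) *
              ((φ t) ^ d * w₁ t)) = 0 := by
            rcases lt_or_gt_of_ne (show n - m ≠ n' - m by omega) with hlt | hgt
            · calc (∫ t in Sset,
                  ((q m (n - m)).eval t * (q m (n' - m)).eval t * φ t ^ (m + m)) *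
                  ((φ t) ^ d * w₁ t)) =
                  ∫ t in Sset, (q m (n' - m)).eval t * (q m (n - m)).eval t *
                    φ t ^ (2 * m + d) * w₁ t := by
                    refine integral_congr_ae (Filter.Eventually.of_forall fun t => ?_)
                    simp only [two_mul, pow_add]
                    ring
                _ = 0 := horthq m (n' - m) (n - m) hlt
            · calc (∫ t in Sset,
                  ((q m (n - m)).eval t * (q m (n' - m)).eval t * φ t ^ (m + m)) *
                  ((φ t) ^ d * w₁ t)) =
                  ∫ t in Sset, (q m (n - m)).eval t * (q m (n' - m)).eval t *
                    φ t ^ (2 * m + d) * w₁ t := by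
                    refine integral_congr_ae (Filter.Eventually.of_forall fun t => ?_)
                    simp only [two_mul, pow_add]
                    ring
                _ = 0 := horthq m (n - m) (n' - m) hgt
          rw [hzero, mul_zero]
      · rw [show (∫ u in Metric.closedBall (0 : EuclideanSpace ℝ (Fin d)) 1,
            MvPolynomial.eval u (Pb m k) * MvPolynomial.eval u (Pb m k') * w₂ u) = 0 from by
            rw [hPorth m k k' hk hk']; exact if_neg hkk, zero_mul, mul_zero,
          if_neg (by tauto)]
    · have hball0 : (∫ u in Metric.closedBall (0 : EuclideanSpace ℝ (Fin d)) 1,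
          MvPolynomial.eval u (Pb m k) * MvPolynomial.eval u (Pb m' k') * w₂ u) = 0 := by
        rcases lt_or_gt_of_ne hmm with hlt | hgt
        · calc (∫ u in Metric.closedBall (0 : EuclideanSpace ℝ (Fin d)) 1,
              MvPolynomial.eval u (Pb m k) * MvPolynomial.eval u (Pb m' k') * w₂ u) =
              ∫ u in Metric.closedBall (0 : EuclideanSpace ℝ (Fin d)) 1,
                MvPolynomial.eval u (Pb m' k') * MvPolynomial.eval u (Pb m k) * w₂ u :=
              integral_congr_ae (Filter.Eventually.of_forall fun u => by ring)
            _ = 0 := hPlow m' k' hk' (Pb m k) (by rw [hPdeg m k hk]; exact hlt)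
        · exact hPlow m k hk (Pb m' k') (by rw [hPdeg m' k' hk']; exact hgt)
      rw [hball0, zero_mul, mul_zero, if_neg (by tauto)]

end
end

section
/- Let d ≥ 2, μ > −1/2, α > −(2μ + d), β > −1. For each m, let {P_k^m : k ∈ ℕ_0^d, |k| = m} be an orthonormal basis of the space of orthogonal polynomials of degree m on the unit ball B^d with respect to the weight ϖ_μ(x) = (1−‖x‖²)^{μ−1/2}. Define Q_{m,k}^{n,μ}(x,t) := P_{n−m}^{(2m+2μ+α+d−1, β)}(1−2t) · t^m · P_k^m(x/t) for |k| = m ≤ n. Then these are polynomials of degree at most n that are mutually orthogonal on the solid cone {(x,t) ∈ ℝ^d × ℝ : ‖x‖ ≤ t, 0 ≤ t ≤ 1} with respect to the weight W(x,t) = t^α(1−t)^β(t² − ‖x‖²)^{μ−1/2}: for (n,m,k) ≠ (n',m',k'), ∫_0^1 ∫_{‖x‖ ≤ t} Q_{m,k}^{n,μ}(x,t) Q_{m',k'}^{n',μ}(x,t) t^α(1−t)^β(t²−‖x‖²)^{μ−1/2} dx dt = 0, while the integral is strictly positive when (n,m,k) = (n',m',k'). -/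
open MeasureTheory MvPolynomial Real

noncomputable section

/-- `p` is a Jacobi polynomial of degree `n` with parameters `(a, b)`. -/
def IsJacobi (a b : ℝ) (n : ℕ) (p : Polynomial ℝ) : Prop :=
  p.degree = n ∧ ∀ k < n,
    ∫ t in Set.Ioo (-1 : ℝ) 1, p.eval t * t ^ k * (1 - t) ^ a * (1 + t) ^ b = 0

/-- The functions `Q_{m,k}^{n,μ}(x,t) = P_{n−m}^{(2m+2μ+α+d−1,β)}(1−2t) t^m P_k^m(x/t)`. -/
def coneFun (d : ℕ) (J : ℕ → ℝ → ℝ → Polynomial ℝ)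
    (Pb : ℕ → (Fin d → ℕ) → MvPolynomial (Fin d) ℝ) (μ α β : ℝ) (n m : ℕ)
    (k : Fin d → ℕ) (x : EuclideanSpace ℝ (Fin d)) (t : ℝ) : ℝ :=
  (J (n - m) (2 * m + 2 * μ + α + d - 1) β).eval (1 - 2 * t) * t ^ m *
    MvPolynomial.eval (t⁻¹ • x) (Pb m k)

/-! ### Auxiliary lemmas -/

section Aux

open Set

lemma measurable_rpow_shift (c e : ℝ) (s : Bool) :
    Measurable fun t : ℝ => (if s then c - t else t - c) ^ e := by
  cases s <;> simp <;> fun_prop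

lemma rpow_le_max {x lo hi : ℝ} (e : ℝ) (hlo : 0 < lo) (h1 : lo ≤ x) (h2 : x ≤ hi) :
    x ^ e ≤ max (lo ^ e) (hi ^ e) := by
  rcases le_or_gt 0 e with he | he
  · exact le_max_of_le_right (Real.rpow_le_rpow (hlo.le.trans h1) h2 he)
  · exact le_max_of_le_left (Real.rpow_le_rpow_of_nonpos hlo h1 he.le)

lemma integrableOn_weight {a b c₁ c₂ : ℝ} (h : c₁ < c₂) (ha : -1 < a) (hb : -1 < b) :
    IntegrableOn (fun t : ℝ => (c₂ - t) ^ a * (t - c₁) ^ b) (Set.Ioo c₁ c₂) := by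
  set mid := (c₁ + c₂) / 2 with hmid
  have h1 : c₁ < mid := by rw [hmid]; linarith
  have h2 : mid < c₂ := by rw [hmid]; linarith
  have hsub : Set.Ioo c₁ c₂ ⊆ Set.Ioc c₁ mid ∪ Set.Ioc mid c₂ := by
    intro x hx
    rcases le_or_gt x mid with hx' | hx'
    · exact Or.inl ⟨hx.1, hx'⟩
    · exact Or.inr ⟨hx', hx.2.le⟩
  refine IntegrableOn.mono_set ?_ hsub
  refine IntegrableOn.union ?_ ?_
  · have hint : IntegrableOn (fun t : ℝ => (t - c₁) ^ b) (Set.Ioc c₁ mid) := by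
      have := (intervalIntegral.intervalIntegrable_rpow' (a := 0) (b := mid - c₁) hb).comp_sub_right c₁
      rw [intervalIntegrable_iff] at this
      refine this.congr_set_ae ?_
      rw [Set.uIoc_of_le (by linarith : 0 + c₁ ≤ mid - c₁ + c₁)]
      norm_num
      exact Filter.EventuallyEq.rfl
    have : IntegrableOn (fun t : ℝ => (c₂ - t) ^ a * (t - c₁) ^ b) (Set.Ioc c₁ mid) := by
      refine Integrable.bdd_mul (c := max ((c₂ - mid) ^ a) ((c₂ - c₁) ^ a)) hint
        ((measurable_rpow_shift c₂ a true).aestronglyMeasurable.restrict) ?_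
      refine (ae_restrict_iff' measurableSet_Ioc).2 (ae_of_all _ fun x hx => ?_)
      have h0 : (0:ℝ) < c₂ - mid := by linarith
      have : (c₂ - x) ^ a ≤ max ((c₂ - mid) ^ a) ((c₂ - c₁) ^ a) :=
        rpow_le_max a h0 (by linarith [hx.2]) (by linarith [hx.1])
      rwa [Real.norm_eq_abs, abs_of_nonneg (Real.rpow_nonneg (by linarith [hx.2]) a)]
    exact this
  · have hint : IntegrableOn (fun t : ℝ => (c₂ - t) ^ a) (Set.Ioc mid c₂) := by
      have := (intervalIntegral.intervalIntegrable_rpow' (a := 0) (b := c₂ - mid) ha).comp_sub_left c₂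
      rw [intervalIntegrable_iff] at this
      refine this.congr_set_ae ?_
      rw [Set.uIoc_of_ge (by linarith : c₂ - (c₂ - mid) ≤ c₂ - 0)]
      norm_num
      exact Filter.EventuallyEq.rfl
    have : IntegrableOn (fun t : ℝ => (t - c₁) ^ b * (c₂ - t) ^ a) (Set.Ioc mid c₂) := by
      refine Integrable.bdd_mul (c := max ((mid - c₁) ^ b) ((c₂ - c₁) ^ b)) hint
        ((measurable_rpow_shift c₁ b false).aestronglyMeasurable.restrict) ?_
      refine (ae_restrict_iff' measurableSet_Ioc).2 (ae_of_all _ fun x hx => ?_)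
      have h0 : (0:ℝ) < mid - c₁ := by linarith
      have : (x - c₁) ^ b ≤ max ((mid - c₁) ^ b) ((c₂ - c₁) ^ b) :=
        rpow_le_max b h0 (by linarith [hx.1]) (by linarith [hx.2])
      rwa [Real.norm_eq_abs, abs_of_nonneg (Real.rpow_nonneg (by linarith [hx.1]) b)]
    exact this.congr_fun (fun x _ => mul_comm _ _) measurableSet_Ioc

lemma integrableOn_cont_mul {c₁ c₂ : ℝ} {f g : ℝ → ℝ} (hf : Continuous f)
    (hg : IntegrableOn g (Set.Ioo c₁ c₂)) :
    IntegrableOn (fun t => f t * g t) (Set.Ioo c₁ c₂) := by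
  obtain ⟨C, hC⟩ := (isCompact_Icc (a := c₁) (b := c₂)).exists_bound_of_continuousOn
    hf.continuousOn
  refine Integrable.bdd_mul (c := C) hg (hf.aestronglyMeasurable.restrict) ?_
  refine (ae_restrict_iff' measurableSet_Ioo).2 (ae_of_all _ fun x hx => ?_)
  exact hC x ⟨hx.1.le, hx.2.le⟩

lemma weight_int {a b : ℝ} (ha : -1 < a) (hb : -1 < b) :
    IntegrableOn (fun s : ℝ => (1 - s) ^ a * (1 + s) ^ b) (Set.Ioo (-1:ℝ) 1) := by
  have := integrableOn_weight (c₁ := -1) (c₂ := 1) (by norm_num) ha hb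
  refine this.congr_fun (fun x _ => ?_) measurableSet_Ioo
  beta_reduce
  rw [sub_neg_eq_add, add_comm]

lemma jacobi_orth {a b : ℝ} (ha : -1 < a) (hb : -1 < b) {N : ℕ} {p : Polynomial ℝ}
    (hp : IsJacobi a b N p) (q : Polynomial ℝ) (hq : q.natDegree < N) :
    ∫ s in Set.Ioo (-1:ℝ) 1, p.eval s * q.eval s * ((1 - s) ^ a * (1 + s) ^ b) = 0 := by
  have hqe : ∀ s : ℝ, q.eval s = ∑ j ∈ Finset.range (q.natDegree + 1), q.coeff j * s ^ j := by
    intro s; rw [Polynomial.eval_eq_sum_range]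
  have key : ∀ s : ℝ, p.eval s * q.eval s * ((1 - s) ^ a * (1 + s) ^ b)
      = ∑ j ∈ Finset.range (q.natDegree + 1),
          q.coeff j * (p.eval s * s ^ j * ((1 - s) ^ a * (1 + s) ^ b)) := by
    intro s
    rw [hqe s, Finset.mul_sum, Finset.sum_mul]
    refine Finset.sum_congr rfl fun j _ => by ring
  calc ∫ s in Set.Ioo (-1:ℝ) 1, p.eval s * q.eval s * ((1 - s) ^ a * (1 + s) ^ b)
      = ∫ s in Set.Ioo (-1:ℝ) 1, ∑ j ∈ Finset.range (q.natDegree + 1),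
          q.coeff j * (p.eval s * s ^ j * ((1 - s) ^ a * (1 + s) ^ b)) := by
        exact setIntegral_congr_fun measurableSet_Ioo fun s _ => key s
    _ = ∑ j ∈ Finset.range (q.natDegree + 1),
          ∫ s in Set.Ioo (-1:ℝ) 1, q.coeff j * (p.eval s * s ^ j * ((1 - s) ^ a * (1 + s) ^ b)) := by
        refine integral_finset_sum _ fun j _ => ?_
        refine Integrable.const_mul ?_ _
        exact integrableOn_cont_mul
          (p.continuous.mul (continuous_pow j)) (weight_int ha hb)
    _ = 0 := by
        refine Finset.sum_eq_zero fun j hj => ?_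
        rw [integral_const_mul]
        have hj' : j < N := lt_of_le_of_lt (Nat.lt_succ_iff.mp (Finset.mem_range.mp hj)) hq
        have := hp.2 j hj'
        have heq : ∫ s in Set.Ioo (-1:ℝ) 1, p.eval s * s ^ j * ((1 - s) ^ a * (1 + s) ^ b)
            = ∫ s in Set.Ioo (-1:ℝ) 1, p.eval s * s ^ j * (1 - s) ^ a * (1 + s) ^ b := by
          exact setIntegral_congr_fun measurableSet_Ioo fun s _ => by ring
        rw [heq, this, mul_zero]

lemma outer_sub (f : ℝ → ℝ) :
    ∫ t in Set.Ioo (0:ℝ) 1, f (1 - 2*t) = (1/2) * ∫ s in Set.Ioo (-1:ℝ) 1, f s := by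
  rw [← MeasureTheory.integral_Ioc_eq_integral_Ioo,
      ← MeasureTheory.integral_Ioc_eq_integral_Ioo,
      ← intervalIntegral.integral_of_le (by norm_num : (0:ℝ) ≤ 1),
      ← intervalIntegral.integral_of_le (by norm_num : (-1:ℝ) ≤ 1)]
  have h1 : ∀ t : ℝ, f (1 - 2*t) = (fun s => f (1 - s)) (t * 2) := by
    intro t; simp [mul_comm]
  simp_rw [h1]
  rw [intervalIntegral.integral_comp_mul_right (fun s => f (1 - s)) (by norm_num : (2:ℝ) ≠ 0)]
  rw [intervalIntegral.integral_comp_sub_left f 1]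
  norm_num

lemma pos_int {a b : ℝ} (ha : -1 < a) (hb : -1 < b) (p : Polynomial ℝ) (hp : p ≠ 0)
    (hInt : IntegrableOn (fun t : ℝ => (p.eval (1 - 2*t))^2 * ((1 - t) ^ b * t ^ a))
      (Set.Ioo (0:ℝ) 1)) :
    0 < ∫ t in Set.Ioo (0:ℝ) 1, (p.eval (1 - 2*t))^2 * ((1 - t) ^ b * t ^ a) := by
  rw [setIntegral_pos_iff_support_of_nonneg_ae]
  · have hfin : ({t : ℝ | p.eval (1 - 2*t) = 0}).Finite := by
      have : {t : ℝ | p.eval (1 - 2*t) = 0} ⊆ (fun t : ℝ => 1 - 2*t) ⁻¹' {x | p.IsRoot x} := by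
        intro t ht; exact ht
      refine Set.Finite.subset ((Polynomial.finite_setOf_isRoot hp).preimage ?_) this
      intro x _ y _ hxy
      dsimp at hxy; linarith
    have hsub : Set.Ioo (0:ℝ) 1 \ {t : ℝ | p.eval (1 - 2*t) = 0} ⊆
        Function.support (fun t : ℝ => (p.eval (1 - 2*t))^2 * ((1 - t) ^ b * t ^ a))
          ∩ Set.Ioo (0:ℝ) 1 := by
      rintro t ⟨ht, hroot⟩
      refine ⟨?_, ht⟩
      simp only [Function.mem_support]
      have he : p.eval (1 - 2*t) ≠ 0 := hroot
      have hw1 : (0:ℝ) < (1 - t) ^ b := Real.rpow_pos_of_pos (by linarith [ht.2]) b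
      have hw2 : (0:ℝ) < t ^ a := Real.rpow_pos_of_pos ht.1 a
      positivity
    have hle := measure_mono (μ := volume) hsub
    rw [measure_diff_null (hfin.measure_zero volume)] at hle
    refine lt_of_lt_of_le ?_ hle
    rw [Real.volume_Ioo]
    norm_num
  · refine (ae_restrict_iff' measurableSet_Ioo).2 (ae_of_all _ fun t ht => ?_)
    have h1 : (0:ℝ) ≤ (1 - t) ^ b := Real.rpow_nonneg (by linarith [ht.2]) b
    have h2 : (0:ℝ) ≤ t ^ a := Real.rpow_nonneg ht.1.le a
    positivity
  · exact hInt

lemma ball_scale (d : ℕ) (f : EuclideanSpace ℝ (Fin d) → ℝ) {t : ℝ} (ht : 0 < t) :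
    ∫ x in Metric.closedBall (0 : EuclideanSpace ℝ (Fin d)) t, f x
      = t ^ d * ∫ u in Metric.closedBall (0 : EuclideanSpace ℝ (Fin d)) 1, f (t • u) := by
  have key := MeasureTheory.Measure.integral_comp_smul (volume : Measure (EuclideanSpace ℝ (Fin d)))
    ((Metric.closedBall (0 : EuclideanSpace ℝ (Fin d)) t).indicator f) t
  rw [finrank_euclideanSpace_fin] at key
  have hind : ∀ u : EuclideanSpace ℝ (Fin d),
      (Metric.closedBall (0 : EuclideanSpace ℝ (Fin d)) t).indicator f (t • u)
        = (Metric.closedBall (0 : EuclideanSpace ℝ (Fin d)) 1).indicator (fun u => f (t • u)) u := by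
    intro u
    by_cases hu : u ∈ Metric.closedBall (0 : EuclideanSpace ℝ (Fin d)) 1
    · rw [Set.indicator_of_mem hu]
      rw [Set.indicator_of_mem]
      rw [Metric.mem_closedBall, dist_zero_right] at hu ⊢
      rw [norm_smul, Real.norm_eq_abs, abs_of_pos ht]
      calc t * ‖u‖ ≤ t * 1 := by nlinarith
        _ = t := mul_one t
    · rw [Set.indicator_of_notMem hu, Set.indicator_of_notMem]
      rw [Metric.mem_closedBall, dist_zero_right] at hu ⊢
      rw [norm_smul, Real.norm_eq_abs, abs_of_pos ht]
      intro hc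
      refine hu ?_
      have : t * ‖u‖ ≤ t * 1 := by linarith [hc]
      exact le_of_mul_le_mul_left this ht
  simp_rw [hind] at key
  rw [MeasureTheory.integral_indicator (measurableSet_closedBall),
      MeasureTheory.integral_indicator (measurableSet_closedBall)] at key
  rw [key, smul_eq_mul, ← mul_assoc]
  rw [abs_of_pos (by positivity : (0:ℝ) < (t ^ d)⁻¹)]
  field_simp

lemma inner_scale (d : ℕ) (P P' : MvPolynomial (Fin d) ℝ) (e : ℝ) {t : ℝ} (ht : 0 < t) :
    ∫ x in Metric.closedBall (0 : EuclideanSpace ℝ (Fin d)) t,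
        MvPolynomial.eval (t⁻¹ • x) P * MvPolynomial.eval (t⁻¹ • x) P'
          * (t ^ 2 - ‖x‖ ^ 2) ^ e
      = t ^ d * (t ^ 2) ^ e *
        ∫ u in Metric.closedBall (0 : EuclideanSpace ℝ (Fin d)) 1,
          MvPolynomial.eval u P * MvPolynomial.eval u P' * (1 - ‖u‖ ^ 2) ^ e := by
  rw [ball_scale d _ ht]
  have hstep : ∫ u in Metric.closedBall (0 : EuclideanSpace ℝ (Fin d)) 1,
      MvPolynomial.eval (t⁻¹ • t • u) P * MvPolynomial.eval (t⁻¹ • t • u) P'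
        * (t ^ 2 - ‖t • u‖ ^ 2) ^ e
      = ∫ u in Metric.closedBall (0 : EuclideanSpace ℝ (Fin d)) 1,
        (t ^ 2) ^ e * (MvPolynomial.eval u P * MvPolynomial.eval u P' * (1 - ‖u‖ ^ 2) ^ e) := by
    refine setIntegral_congr_fun measurableSet_closedBall fun u hu => ?_
    rw [Metric.mem_closedBall, dist_zero_right] at hu
    have h1 : t⁻¹ • t • u = u := by
      rw [smul_smul, inv_mul_cancel₀ ht.ne', one_smul]
    have h2 : ‖t • u‖ ^ 2 = t ^ 2 * ‖u‖ ^ 2 := by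
      rw [norm_smul, Real.norm_eq_abs, mul_pow, sq_abs]
    have h3 : (t ^ 2 - ‖t • u‖ ^ 2) ^ e = (t ^ 2) ^ e * (1 - ‖u‖ ^ 2) ^ e := by
      rw [h2]
      have : t ^ 2 - t ^ 2 * ‖u‖ ^ 2 = t ^ 2 * (1 - ‖u‖ ^ 2) := by ring
      rw [this, Real.mul_rpow (by positivity) (by nlinarith [norm_nonneg u])]
    rw [h1, h3]; ring
  rw [hstep, MeasureTheory.integral_const_mul]
  ring

lemma totalDegree_aeval_X_le {σ : Type*} (r : Polynomial ℝ) (i : σ) :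
    (Polynomial.aeval (MvPolynomial.X i : MvPolynomial σ ℝ) r).totalDegree ≤ r.natDegree := by
  rw [Polynomial.aeval_eq_sum_range]
  refine le_trans (MvPolynomial.totalDegree_finset_sum _ _) ?_
  refine Finset.sup_le fun j hj => ?_
  refine le_trans (MvPolynomial.totalDegree_smul_le _ _) ?_
  rw [MvPolynomial.totalDegree_X_pow]
  exact Nat.lt_succ_iff.mp (Finset.mem_range.mp hj)

lemma eval_aeval_X {σ : Type*} (r : Polynomial ℝ) (i : σ) (f : σ → ℝ) :
    MvPolynomial.eval f (Polynomial.aeval (MvPolynomial.X i) r) = r.eval (f i) := by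
  rw [Polynomial.aeval_eq_sum_range, map_sum, Polynomial.eval_eq_sum_range]
  refine Finset.sum_congr rfl fun j _ => ?_
  simp [MvPolynomial.smul_eq_C_mul, smul_eq_mul]

def homog (d m : ℕ) (P : MvPolynomial (Fin d) ℝ) : MvPolynomial (Fin (d+1)) ℝ :=
  ∑ γ ∈ P.support, MvPolynomial.C (MvPolynomial.coeff γ P) *
    (∏ i : Fin d, MvPolynomial.X (i.castSucc) ^ γ i) *
    MvPolynomial.X (Fin.last d) ^ (m - ∑ i, γ i)

lemma sum_eq_finsuppSum (d : ℕ) (γ : Fin d →₀ ℕ) : (∑ i, γ i) = γ.sum fun _ e => e :=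
  (Finsupp.sum_fintype γ (fun _ e => e) fun _ => rfl).symm

lemma totalDegree_homog_le (d m : ℕ) (P : MvPolynomial (Fin d) ℝ) (hP : P.totalDegree ≤ m) :
    (homog d m P).totalDegree ≤ m := by
  refine le_trans (MvPolynomial.totalDegree_finset_sum _ _) ?_
  refine Finset.sup_le fun γ hγ => ?_
  have hs : (∑ i, γ i) ≤ m := by
    rw [sum_eq_finsuppSum]
    exact le_trans (MvPolynomial.le_totalDegree hγ) hP
  refine le_trans (MvPolynomial.totalDegree_mul _ _) ?_
  have h1 : (MvPolynomial.C (MvPolynomial.coeff γ P) *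
      (∏ i : Fin d, MvPolynomial.X (i.castSucc) ^ γ i) : MvPolynomial (Fin (d+1)) ℝ).totalDegree
      ≤ ∑ i, γ i := by
    refine le_trans (MvPolynomial.totalDegree_mul _ _) ?_
    rw [MvPolynomial.totalDegree_C, zero_add]
    refine le_trans (MvPolynomial.totalDegree_finset_prod _ _) ?_
    refine le_of_eq (Finset.sum_congr rfl fun i _ => ?_)
    exact MvPolynomial.totalDegree_X_pow _ _
  have h2 : ((MvPolynomial.X (Fin.last d) : MvPolynomial (Fin (d+1)) ℝ) ^ (m - ∑ i, γ i)).totalDegree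
      = m - ∑ i, γ i := MvPolynomial.totalDegree_X_pow _ _
  rw [h2]
  omega

lemma eval_homog (d m : ℕ) (P : MvPolynomial (Fin d) ℝ) (hP : P.totalDegree ≤ m)
    (y : Fin d → ℝ) {t : ℝ} (ht : t ≠ 0) :
    MvPolynomial.eval (Fin.snoc y t) (homog d m P) = t ^ m * MvPolynomial.eval (t⁻¹ • y) P := by
  rw [homog, map_sum, MvPolynomial.eval_eq' (t⁻¹ • y) P, Finset.mul_sum]
  refine Finset.sum_congr rfl fun γ hγ => ?_
  have hs : (∑ i, γ i) ≤ m := by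
    rw [sum_eq_finsuppSum]
    exact le_trans (MvPolynomial.le_totalDegree hγ) hP
  simp only [map_mul, map_prod, map_pow, MvPolynomial.eval_C, MvPolynomial.eval_X,
    Fin.snoc_castSucc, Fin.snoc_last]
  have hprod : (∏ i, (t⁻¹ • y) i ^ γ i) = (t⁻¹) ^ (∑ i, γ i) * ∏ i, y i ^ γ i := by
    rw [← Finset.prod_pow_eq_pow_sum, ← Finset.prod_mul_distrib]
    refine Finset.prod_congr rfl fun i _ => ?_
    rw [Pi.smul_apply, smul_eq_mul, mul_pow]
  rw [hprod]
  have hpow : t ^ m * (t⁻¹) ^ (∑ i, γ i) = t ^ (m - ∑ i, γ i) := by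
    rw [inv_pow, ← Nat.sub_add_cancel hs, pow_add]
    field_simp
    rw [Nat.add_sub_cancel]
  calc MvPolynomial.coeff γ P * (∏ i, y i ^ γ i) * t ^ (m - ∑ i, γ i)
      = MvPolynomial.coeff γ P * (∏ i, y i ^ γ i) * (t ^ m * (t⁻¹) ^ (∑ i, γ i)) := by
        rw [hpow]
    _ = t ^ m * (MvPolynomial.coeff γ P * ((t⁻¹) ^ (∑ i, γ i) * ∏ i, y i ^ γ i)) := by ring

lemma pow_combine {t : ℝ} (ht : 0 < t) (m m' d : ℕ) (μ α : ℝ) :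
    t ^ m * t ^ m' * (t ^ d * (t ^ 2) ^ (μ - 1/2)) * t ^ α
      = t ^ ((m:ℝ) + (m':ℝ) + 2*μ + α + (d:ℝ) - 1) := by
  rw [← Real.rpow_natCast t m, ← Real.rpow_natCast t m', ← Real.rpow_natCast t d,
      ← Real.rpow_natCast t 2, ← Real.rpow_mul ht.le,
      ← Real.rpow_add ht, ← Real.rpow_add ht, ← Real.rpow_add ht, ← Real.rpow_add ht]
  norm_num
  ring_nf

/-- The key pointwise computation for the outer integrand. -/
lemma key_calc (d : ℕ) (J : ℕ → ℝ → ℝ → Polynomial ℝ)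
    (Pb : ℕ → (Fin d → ℕ) → MvPolynomial (Fin d) ℝ) (μ α β : ℝ)
    (n m n' m' : ℕ) (k k' : Fin d → ℕ) {t : ℝ} (ht : t ∈ Set.Ioo (0:ℝ) 1) :
    (∫ x in Metric.closedBall (0 : EuclideanSpace ℝ (Fin d)) t,
        coneFun d J Pb μ α β n m k x t * coneFun d J Pb μ α β n' m' k' x t *
        (t ^ 2 - ‖x‖ ^ 2) ^ (μ - 1 / 2)) * (t ^ α * (1 - t) ^ β)
    = (J (n - m) (2*m + 2*μ + α + d - 1) β).eval (1 - 2*t) *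
      (J (n' - m') (2*m' + 2*μ + α + d - 1) β).eval (1 - 2*t) *
      (∫ u in Metric.closedBall (0 : EuclideanSpace ℝ (Fin d)) 1,
        MvPolynomial.eval u (Pb m k) * MvPolynomial.eval u (Pb m' k') *
          (1 - ‖u‖ ^ 2) ^ (μ - 1/2)) *
      ((1 - t) ^ β * t ^ ((m:ℝ) + (m':ℝ) + 2*μ + α + (d:ℝ) - 1)) := by
  obtain ⟨ht0, ht1⟩ := ht
  set c₁ := (J (n - m) (2*m + 2*μ + α + d - 1) β).eval (1 - 2*t) with hc₁
  set c₂ := (J (n' - m') (2*m' + 2*μ + α + d - 1) β).eval (1 - 2*t) with hc₂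
  set I₀ := ∫ u in Metric.closedBall (0 : EuclideanSpace ℝ (Fin d)) 1,
        MvPolynomial.eval u (Pb m k) * MvPolynomial.eval u (Pb m' k') *
          (1 - ‖u‖ ^ 2) ^ (μ - 1/2) with hI₀
  have hstep : (∫ x in Metric.closedBall (0 : EuclideanSpace ℝ (Fin d)) t,
      coneFun d J Pb μ α β n m k x t * coneFun d J Pb μ α β n' m' k' x t *
        (t ^ 2 - ‖x‖ ^ 2) ^ (μ - 1 / 2))
      = (c₁ * c₂ * (t ^ m * t ^ m')) *
        ∫ x in Metric.closedBall (0 : EuclideanSpace ℝ (Fin d)) t,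
          MvPolynomial.eval (t⁻¹ • x) (Pb m k) * MvPolynomial.eval (t⁻¹ • x) (Pb m' k') *
            (t ^ 2 - ‖x‖ ^ 2) ^ (μ - 1/2) := by
    rw [← MeasureTheory.integral_const_mul]
    refine setIntegral_congr_fun measurableSet_closedBall fun x _ => ?_
    simp only [coneFun, ← hc₁, ← hc₂]
    ring
  rw [hstep, inner_scale d _ _ _ ht0, ← hI₀]
  have hpc := pow_combine ht0 m m' d μ α
  linear_combination (c₁ * c₂ * I₀ * (1 - t) ^ β) * hpc

end Aux

/-- For `d ≥ 2`, `μ > −1/2`, `α > −(2μ+d)`, `β > −1`, the functions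
`Q_{m,k}^{n,μ}(x,t) = P_{n−m}^{(2m+2μ+α+d−1,β)}(1−2t) t^m P_k^m(x/t)` are polynomials of
degree at most `n` which are mutually orthogonal on the solid cone
`{(x,t) : ‖x‖ ≤ t, 0 ≤ t ≤ 1}` with respect to `t^α (1−t)^β (t²−‖x‖²)^{μ−1/2}`,
with strictly positive norms. -/
theorem solid_cone_orthogonality
    (d : ℕ) (hd : 2 ≤ d) (μ α β : ℝ)
    (hμ : -(1 / 2 : ℝ) < μ) (hα : -(2 * μ + d) < α) (hβ : -1 < β)
    (J : ℕ → ℝ → ℝ → Polynomial ℝ)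
    (hJ : ∀ (j : ℕ) (a b : ℝ), -1 < a → -1 < b → IsJacobi a b j (J j a b))
    -- an orthonormal basis `{P_k^m : |k| = m}` of orthogonal polynomials on the ball
    -- with respect to `ϖ_μ(x) = (1−‖x‖²)^{μ−1/2}`
    (Pb : ℕ → (Fin d → ℕ) → MvPolynomial (Fin d) ℝ)
    (hPdeg : ∀ m (k : Fin d → ℕ), (∑ i, k i) = m → (Pb m k).totalDegree = m)
    (hPlow : ∀ m (k : Fin d → ℕ), (∑ i, k i) = m →
      ∀ Q : MvPolynomial (Fin d) ℝ, Q.totalDegree < m →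
        ∫ u in Metric.closedBall (0 : EuclideanSpace ℝ (Fin d)) 1,
          MvPolynomial.eval u (Pb m k) * MvPolynomial.eval u Q *
            (1 - ‖u‖ ^ 2) ^ (μ - 1 / 2) = 0)
    (hPorth : ∀ m (k k' : Fin d → ℕ), (∑ i, k i) = m → (∑ i, k' i) = m →
      ∫ u in Metric.closedBall (0 : EuclideanSpace ℝ (Fin d)) 1,
        MvPolynomial.eval u (Pb m k) * MvPolynomial.eval u (Pb m k') *
          (1 - ‖u‖ ^ 2) ^ (μ - 1 / 2) = if k = k' then 1 else 0) :
    ∀ n m n' m' : ℕ, ∀ k k' : Fin d → ℕ,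
      m ≤ n → (∑ i, k i) = m → m' ≤ n' → (∑ i, k' i) = m' →
      -- `Q_{m,k}^{n,μ}` is a polynomial of total degree at most `n`
      (∃ Q : MvPolynomial (Fin (d + 1)) ℝ, Q.totalDegree ≤ n ∧
        ∀ (x : EuclideanSpace ℝ (Fin d)) (t : ℝ), t ≠ 0 →
          MvPolynomial.eval (Fin.snoc (x : Fin d → ℝ) t) Q =
            coneFun d J Pb μ α β n m k x t) ∧
      -- orthogonality
      (((n, m, k) ≠ (n', m', k')) →
        ∫ t in Set.Ioo (0 : ℝ) 1,
          (∫ x in Metric.closedBall (0 : EuclideanSpace ℝ (Fin d)) t,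
            coneFun d J Pb μ α β n m k x t * coneFun d J Pb μ α β n' m' k' x t *
            (t ^ 2 - ‖x‖ ^ 2) ^ (μ - 1 / 2)) *
          (t ^ α * (1 - t) ^ β) = 0) ∧
      -- positivity
      (0 < ∫ t in Set.Ioo (0 : ℝ) 1,
          (∫ x in Metric.closedBall (0 : EuclideanSpace ℝ (Fin d)) t,
            coneFun d J Pb μ α β n m k x t ^ 2 *
            (t ^ 2 - ‖x‖ ^ 2) ^ (μ - 1 / 2)) *
          (t ^ α * (1 - t) ^ β)) := by
  intro n m n' m' k k' hmn hk hm'n' hk'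
  have hsum : (0:ℝ) < 2*μ + d + α := by linarith
  have haparam : ∀ mm : ℕ, (-1:ℝ) < 2*(mm:ℝ) + 2*μ + α + (d:ℝ) - 1 := by
    intro mm
    have : (0:ℝ) ≤ (mm:ℝ) := Nat.cast_nonneg mm
    linarith
  refine ⟨?_, ?_, ?_⟩
  · -- polynomial of total degree at most n
    set r : Polynomial ℝ := (J (n - m) (2*m + 2*μ + α + d - 1) β).comp
      (Polynomial.C 1 - Polynomial.C 2 * Polynomial.X) with hr
    refine ⟨Polynomial.aeval (MvPolynomial.X (Fin.last d) : MvPolynomial (Fin (d+1)) ℝ) r *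
      homog d m (Pb m k), ?_, ?_⟩
    · refine le_trans (MvPolynomial.totalDegree_mul _ _) ?_
      have h1 : (Polynomial.aeval (MvPolynomial.X (Fin.last d) : MvPolynomial (Fin (d+1)) ℝ)
          r).totalDegree ≤ n - m := by
        refine le_trans (totalDegree_aeval_X_le r _) ?_
        refine le_trans Polynomial.natDegree_comp_le ?_
        have hdeg : (J (n-m) (2*m + 2*μ + α + d - 1) β).natDegree = n - m :=
          Polynomial.natDegree_eq_of_degree_eq_some (hJ _ _ _ (haparam m) hβ).1
        have h2 : (Polynomial.C (1:ℝ) - Polynomial.C 2 * Polynomial.X).natDegree ≤ 1 := by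
          compute_degree
        calc (J (n-m) (2*m + 2*μ + α + d - 1) β).natDegree *
              (Polynomial.C (1:ℝ) - Polynomial.C 2 * Polynomial.X).natDegree
            ≤ (n - m) * 1 := Nat.mul_le_mul (le_of_eq hdeg) h2
          _ = n - m := mul_one _
      have h2 := totalDegree_homog_le d m (Pb m k) (le_of_eq (hPdeg m k hk))
      omega
    · intro x t ht
      rw [map_mul, eval_aeval_X, eval_homog d m (Pb m k) (le_of_eq (hPdeg m k hk)) _ ht,
        Fin.snoc_last, hr, Polynomial.eval_comp]
      simp only [Polynomial.eval_sub, Polynomial.eval_mul, Polynomial.eval_C, Polynomial.eval_X]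
      rw [coneFun]
      ring
      rfl
  · -- orthogonality
    intro hne
    by_cases hmm : m = m'
    · subst hmm
      by_cases hkk : k = k'
      · subst hkk
        have hnn : n ≠ n' := by
          intro h; exact hne (by rw [h])
        have hI : (∫ u in Metric.closedBall (0 : EuclideanSpace ℝ (Fin d)) 1,
            MvPolynomial.eval u (Pb m k) * MvPolynomial.eval u (Pb m k) *
              (1 - ‖u‖ ^ 2) ^ (μ - 1/2)) = 1 := by
          have := hPorth m k k hk hk
          rw [if_pos rfl] at this
          exact this
        have ha := haparam m
        set aa : ℝ := 2*(m:ℝ) + 2*μ + α + (d:ℝ) - 1 with haa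
        set p := J (n - m) aa β with hp
        set p' := J (n' - m) aa β with hp'
        set F : ℝ → ℝ := fun s =>
          p.eval s * p'.eval s * (((1+s)/2) ^ β * ((1-s)/2) ^ aa) with hF
        have hcong : ∀ t ∈ Set.Ioo (0:ℝ) 1,
            (∫ x in Metric.closedBall (0 : EuclideanSpace ℝ (Fin d)) t,
              coneFun d J Pb μ α β n m k x t * coneFun d J Pb μ α β n' m k x t *
              (t ^ 2 - ‖x‖ ^ 2) ^ (μ - 1 / 2)) * (t ^ α * (1 - t) ^ β)
            = F (1 - 2*t) := by
          intro t ht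
          rw [key_calc d J Pb μ α β n m n' m k k ht, hI, hF]
          have e1 : (1 + (1 - 2*t))/2 = 1 - t := by ring
          have e2 : (1 - (1 - 2*t))/2 = t := by ring
          simp only [e1, e2]
          have e3 : ((m:ℝ) + (m:ℝ) + 2*μ + α + (d:ℝ) - 1 : ℝ) = aa := by rw [haa]; ring
          rw [e3]
          ring
        rw [setIntegral_congr_fun measurableSet_Ioo hcong, outer_sub F]
        have hsplit : ∫ s in Set.Ioo (-1:ℝ) 1, F s
            = ((1/2:ℝ) ^ β * (1/2:ℝ) ^ aa) *
              ∫ s in Set.Ioo (-1:ℝ) 1, p.eval s * p'.eval s * ((1 - s) ^ aa * (1 + s) ^ β) := by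
          rw [← MeasureTheory.integral_const_mul]
          refine setIntegral_congr_fun measurableSet_Ioo fun s hs => ?_
          rw [hF]
          dsimp only
          have hx1 : (0:ℝ) ≤ 1 + s := by linarith [hs.1]
          have hx2 : (0:ℝ) ≤ 1 - s := by linarith [hs.2]
          rw [Real.div_rpow hx1 (by norm_num : (0:ℝ) ≤ 2),
              Real.div_rpow hx2 (by norm_num : (0:ℝ) ≤ 2),
              Real.div_rpow (by norm_num : (0:ℝ) ≤ 1) (by norm_num : (0:ℝ) ≤ 2) β,
              Real.div_rpow (by norm_num : (0:ℝ) ≤ 1) (by norm_num : (0:ℝ) ≤ 2) aa,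
              Real.one_rpow, Real.one_rpow]
          ring
        rw [hsplit]
        have hz : ∫ s in Set.Ioo (-1:ℝ) 1, p.eval s * p'.eval s * ((1 - s) ^ aa * (1 + s) ^ β)
            = 0 := by
          rcases lt_or_gt_of_ne hnn with h | h
          · -- n < n' : p has smaller degree
            have hq : p.natDegree < n' - m := by
              rw [hp, Polynomial.natDegree_eq_of_degree_eq_some (hJ (n-m) aa β ha hβ).1]
              omega
            have horth := jacobi_orth ha hβ (hJ (n'-m) aa β ha hβ) p hq
            calc ∫ s in Set.Ioo (-1:ℝ) 1, p.eval s * p'.eval s * ((1 - s) ^ aa * (1 + s) ^ β)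
                = ∫ s in Set.Ioo (-1:ℝ) 1, p'.eval s * p.eval s * ((1 - s) ^ aa * (1 + s) ^ β) :=
                  setIntegral_congr_fun measurableSet_Ioo fun s _ => by ring
              _ = 0 := horth
          · have hq : p'.natDegree < n - m := by
              rw [hp', Polynomial.natDegree_eq_of_degree_eq_some (hJ (n'-m) aa β ha hβ).1]
              omega
            exact jacobi_orth ha hβ (hJ (n-m) aa β ha hβ) p' hq
        rw [hz]
        ring
      · -- k ≠ k'
        have hI : (∫ u in Metric.closedBall (0 : EuclideanSpace ℝ (Fin d)) 1,
            MvPolynomial.eval u (Pb m k) * MvPolynomial.eval u (Pb m k') *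
              (1 - ‖u‖ ^ 2) ^ (μ - 1/2)) = 0 := by
          have := hPorth m k k' hk hk'
          rw [if_neg hkk] at this
          exact this
        have hcong : ∀ t ∈ Set.Ioo (0:ℝ) 1,
            (∫ x in Metric.closedBall (0 : EuclideanSpace ℝ (Fin d)) t,
              coneFun d J Pb μ α β n m k x t * coneFun d J Pb μ α β n' m k' x t *
              (t ^ 2 - ‖x‖ ^ 2) ^ (μ - 1 / 2)) * (t ^ α * (1 - t) ^ β) = 0 := by
          intro t ht
          rw [key_calc d J Pb μ α β n m n' m k k' ht, hI]
          ring
        rw [setIntegral_congr_fun measurableSet_Ioo hcong]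
        simp
    · -- m ≠ m'
      have hI : (∫ u in Metric.closedBall (0 : EuclideanSpace ℝ (Fin d)) 1,
          MvPolynomial.eval u (Pb m k) * MvPolynomial.eval u (Pb m' k') *
            (1 - ‖u‖ ^ 2) ^ (μ - 1/2)) = 0 := by
        rcases lt_or_gt_of_ne hmm with h | h
        · have h0 := hPlow m' k' hk' (Pb m k) (by rw [hPdeg m k hk]; exact h)
          calc (∫ u in Metric.closedBall (0 : EuclideanSpace ℝ (Fin d)) 1,
              MvPolynomial.eval u (Pb m k) * MvPolynomial.eval u (Pb m' k') *
                (1 - ‖u‖ ^ 2) ^ (μ - 1/2))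
              = ∫ u in Metric.closedBall (0 : EuclideanSpace ℝ (Fin d)) 1,
                MvPolynomial.eval u (Pb m' k') * MvPolynomial.eval u (Pb m k) *
                  (1 - ‖u‖ ^ 2) ^ (μ - 1/2) :=
                setIntegral_congr_fun measurableSet_closedBall fun u _ => by ring
            _ = 0 := h0
        · have h0 := hPlow m k hk (Pb m' k') (by rw [hPdeg m' k' hk']; exact h)
          exact h0
      have hcong : ∀ t ∈ Set.Ioo (0:ℝ) 1,
          (∫ x in Metric.closedBall (0 : EuclideanSpace ℝ (Fin d)) t,
            coneFun d J Pb μ α β n m k x t * coneFun d J Pb μ α β n' m' k' x t *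
            (t ^ 2 - ‖x‖ ^ 2) ^ (μ - 1 / 2)) * (t ^ α * (1 - t) ^ β) = 0 := by
        intro t ht
        rw [key_calc d J Pb μ α β n m n' m' k k' ht, hI]
        ring
      rw [setIntegral_congr_fun measurableSet_Ioo hcong]
      simp
  · -- positivity
    have hI : (∫ u in Metric.closedBall (0 : EuclideanSpace ℝ (Fin d)) 1,
        MvPolynomial.eval u (Pb m k) * MvPolynomial.eval u (Pb m k) *
          (1 - ‖u‖ ^ 2) ^ (μ - 1/2)) = 1 := by
      have := hPorth m k k hk hk
      rw [if_pos rfl] at this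
      exact this
    have ha := haparam m
    set aa : ℝ := 2*(m:ℝ) + 2*μ + α + (d:ℝ) - 1 with haa
    set p := J (n - m) aa β with hp
    have hp0 : p ≠ 0 := by
      intro h
      have hdeg := (hJ (n-m) aa β ha hβ).1
      rw [hp] at h
      rw [h, Polynomial.degree_zero] at hdeg
      exact absurd hdeg (by simp)
    have hcong : ∀ t ∈ Set.Ioo (0:ℝ) 1,
        (∫ x in Metric.closedBall (0 : EuclideanSpace ℝ (Fin d)) t,
          coneFun d J Pb μ α β n m k x t ^ 2 *
          (t ^ 2 - ‖x‖ ^ 2) ^ (μ - 1 / 2)) * (t ^ α * (1 - t) ^ β)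
        = (p.eval (1 - 2*t))^2 * ((1 - t) ^ β * t ^ aa) := by
      intro t ht
      have h1 : (∫ x in Metric.closedBall (0 : EuclideanSpace ℝ (Fin d)) t,
          coneFun d J Pb μ α β n m k x t ^ 2 * (t ^ 2 - ‖x‖ ^ 2) ^ (μ - 1 / 2))
          = ∫ x in Metric.closedBall (0 : EuclideanSpace ℝ (Fin d)) t,
            coneFun d J Pb μ α β n m k x t * coneFun d J Pb μ α β n m k x t *
              (t ^ 2 - ‖x‖ ^ 2) ^ (μ - 1 / 2) :=
        setIntegral_congr_fun measurableSet_closedBall fun x _ => by rw [sq]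
      rw [h1, key_calc d J Pb μ α β n m n m k k ht, hI]
      have e3 : ((m:ℝ) + (m:ℝ) + 2*μ + α + (d:ℝ) - 1 : ℝ) = aa := by rw [haa]; ring
      rw [e3, ← hp]
      ring
    rw [setIntegral_congr_fun measurableSet_Ioo hcong]
    refine pos_int ha hβ p hp0 ?_
    have hw := integrableOn_weight (c₁ := (0:ℝ)) (c₂ := 1) (by norm_num) hβ ha
    have hw' : IntegrableOn (fun t : ℝ => (1-t) ^ β * t ^ aa) (Set.Ioo (0:ℝ) 1) :=
      hw.congr_fun (fun x _ => by simp) measurableSet_Ioo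
    refine integrableOn_cont_mul ?_ hw'
    exact (p.continuous.comp (continuous_const.sub (continuous_const.mul continuous_id))).pow 2
end
end

section
/- Let d ≥ 2, let S ⊆ ℝ be a nonempty open interval, and let φ : S → (0,∞) be such that φ(t)² is a polynomial in t of degree at most 2. Let w ≥ 0 be a weight on S, positive almost everywhere, with all moments ∫_S |t|^k φ(t)^{d−1} w(t) dt finite. Suppose: (1) ξ_1,…,ξ_N ∈ S^{d−1} and μ_1,…,μ_N > 0 satisfy ∫_{S^{d−1}} g(ξ) dσ(ξ) = Σ_{k=1}^N μ_k g(ξ_k) for every polynomial g of degree at most 2n−1 on ℝ^d; (2) t_1,…,t_n ∈ S are the zeros of the orthogonal polynomial of degree n with respect to the weight φ(t)^{d−1} w(t) on S, and ν_1,…,ν_n are the Gauss quadrature weights, so that ∫_S g(t) φ(t)^{d−1} w(t) dt = Σ_{j=1}^n ν_j g(t_j) for every polynomial g of one variable of degree at most 2n−1. Then for every polynomial f of total degree at most 2n−1 in d+1 variables, ∫_S φ(t)^{d−1} (∫_{S^{d−1}} f(φ(t)ξ, t) dσ(ξ)) w(t) dt = Σ_{j=1}^n Σ_{k=1}^N ν_j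 μ_k f(φ(t_j) ξ_k, t_j). -/
open MeasureTheory MvPolynomial

noncomputable section

/-- The surface measure `dσ` on the unit sphere `S^{d−1} ⊆ ℝ^d`. -/
def sphMeas (d : ℕ) : Measure (Metric.sphere (0 : EuclideanSpace ℝ (Fin d)) 1) :=
  (volume : Measure (EuclideanSpace ℝ (Fin d))).toSphere

/-!
For fixed `t`, expanding `f (φ(t) ζ, t)` in monomials writes the inner integral
`∫ f (φ(t) ζ, t) dσ(ζ)` through the moments of `σ`. The odd moments vanish by antipodal symmetry,
so only even powers of `φ(t)` survive; as `φ²` is quadratic, the inner integral is a polynomial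
in `t` of degree at most `deg f`. The Gauss rule integrates this polynomial exactly, and at each
node `t_j` the cubature rule on the sphere computes the inner integral exactly.
-/

open Metric

namespace MeasureTheory.Measure

variable {E : Type*} [NormedAddCommGroup E] [NormedSpace ℝ E] [MeasurableSpace E] [BorelSpace E]

instance toSphere.instIsNegInvariant (μ : Measure E) [μ.IsNegInvariant] :
    μ.toSphere.IsNegInvariant := by
  constructor
  ext s hs
  have himage : ((↑) '' (-s) : Set E) = -((↑) '' s) :=
    Set.image_neg_of_apply_neg_eq_neg fun _ _ => rfl
  rw [neg_def, map_apply measurable_neg hs, Set.neg_preimage, toSphere_apply' _ hs.neg,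
    toSphere_apply' _ hs, himage, Set.smul_neg, measure_neg]

theorem integral_toSphere_eq_zero_of_odd (μ : Measure E) [μ.IsNegInvariant]
    {F : sphere (0 : E) 1 → ℝ} (hF : ∀ ζ, F (-ζ) = -F ζ) : ∫ ζ, F ζ ∂μ.toSphere = 0 := by
  have h := (measurePreserving_neg μ.toSphere).integral_comp
    (MeasurableEquiv.neg _).measurableEmbedding F
  simp only [hF, integral_neg] at h
  linarith

end MeasureTheory.Measure

theorem MvPolynomial.eval_snoc_smul {R : Type*} [CommSemiring R] {d : ℕ}
    (f : MvPolynomial (Fin (d + 1)) R) (r t : R) (x : Fin d → R) :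
    eval (Fin.snoc (r • x) t) f = ∑ α ∈ f.support, coeff α f * r ^ (∑ i : Fin d, α i.castSucc) *
      t ^ α (Fin.last d) * ∏ i, x i ^ α i.castSucc := by
  conv_lhs => rw [f.as_sum, map_sum]
  refine Finset.sum_congr rfl fun α _ => ?_
  simp only [eval_monomial, Finsupp.prod_fintype _ _ (fun i => pow_zero _), Fin.prod_univ_castSucc,
    Fin.snoc_castSucc, Fin.snoc_last, Pi.smul_apply, smul_eq_mul, mul_pow,
    Finset.prod_mul_distrib, Finset.prod_pow_eq_pow_sum]
  ring

theorem MvPolynomial.sum_castSucc_add_last_le_totalDegree {R : Type*} [CommSemiring R] {d : ℕ}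
    {f : MvPolynomial (Fin (d + 1)) R} {α : Fin (d + 1) →₀ ℕ} (hα : α ∈ f.support) :
    ∑ i : Fin d, α i.castSucc + α (Fin.last d) ≤ f.totalDegree := by
  simpa [Finsupp.sum_fintype, Fin.sum_univ_castSucc] using le_totalDegree hα

section SphereMoments

variable {d : ℕ}

local notation "𝕊" => sphere (0 : EuclideanSpace ℝ (Fin d)) 1

instance : IsFiniteMeasure (sphMeas d) := by
  unfold sphMeas
  infer_instance

def sphereMoment (ρ : Measure 𝕊) (β : Fin d → ℕ) : ℝ :=
  ∫ ζ, ∏ i, (ζ : EuclideanSpace ℝ (Fin d)) i ^ β i ∂ρ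

theorem sphereMoment_sphMeas_eq_zero_of_odd {β : Fin d → ℕ} (hβ : Odd (∑ i, β i)) :
    sphereMoment (sphMeas d) β = 0 :=
  Measure.integral_toSphere_eq_zero_of_odd _ fun ζ => by
    simp only [coe_neg_sphere, PiLp.neg_apply]
    rw [Finset.prod_congr rfl fun i _ => neg_pow _ (β i), Finset.prod_mul_distrib,
      Finset.prod_pow_eq_pow_sum, hβ.neg_one_pow, neg_one_mul]

theorem pow_sum_mul_sphereMoment_sphMeas {r s : ℝ} (hrs : r ^ 2 = s) (β : Fin d → ℕ) :
    r ^ (∑ i, β i) * sphereMoment (sphMeas d) β =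
      s ^ ((∑ i, β i) / 2) * sphereMoment (sphMeas d) β := by
  rcases Nat.even_or_odd (∑ i, β i) with ⟨k, hk⟩ | hodd
  · rw [hk, ← two_mul, Nat.mul_div_cancel_left k two_pos, pow_mul, hrs]
  · simp [sphereMoment_sphMeas_eq_zero_of_odd hodd]

theorem integral_eval_snoc_smul (ρ : Measure 𝕊) [IsFiniteMeasure ρ]
    (f : MvPolynomial (Fin (d + 1)) ℝ) (r t : ℝ) :
    ∫ ζ : 𝕊, eval (Fin.snoc (r • (ζ : EuclideanSpace ℝ (Fin d))) t) f ∂ρ =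
      ∑ α ∈ f.support, coeff α f * r ^ (∑ i : Fin d, α i.castSucc) * t ^ α (Fin.last d) *
        sphereMoment ρ (fun i => α i.castSucc) := by
  simp_rw [WithLp.ofLp_smul, eval_snoc_smul]
  rw [integral_finsetSum _ fun α _ => (Continuous.integrable_of_hasCompactSupport
    (by fun_prop) (.of_compactSpace _))]
  simp_rw [integral_const_mul]
  rfl

theorem integral_eval_snoc_smul_eq_sum {ι : Type*} [Fintype ι] (ρ : Measure 𝕊) [IsFiniteMeasure ρ]
    (ξ : ι → 𝕊) (c : ι → ℝ) {D : ℕ}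
    (hρ : ∀ g : MvPolynomial (Fin d) ℝ, g.totalDegree ≤ D →
      ∫ ζ : 𝕊, eval (ζ : EuclideanSpace ℝ (Fin d)) g ∂ρ =
        ∑ k, c k * eval (ξ k : EuclideanSpace ℝ (Fin d)) g)
    {f : MvPolynomial (Fin (d + 1)) ℝ} (hf : f.totalDegree ≤ D) (r t : ℝ) :
    ∫ ζ : 𝕊, eval (Fin.snoc (r • (ζ : EuclideanSpace ℝ (Fin d))) t) f ∂ρ =
      ∑ k, c k * eval (Fin.snoc (r • (ξ k : EuclideanSpace ℝ (Fin d))) t) f := by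
  have hmoment : ∀ α ∈ f.support, sphereMoment ρ (fun i => α i.castSucc) =
      ∑ k, c k * ∏ i, (ξ k : EuclideanSpace ℝ (Fin d)) i ^ α i.castSucc := by
    intro α hα
    have hdeg : (∏ i, X i ^ α i.castSucc : MvPolynomial (Fin d) ℝ).totalDegree ≤ D := by
      refine (totalDegree_finsetProd _ _).trans ?_
      simp only [totalDegree_X_pow]
      linarith [sum_castSucc_add_last_le_totalDegree hα]
    simpa [sphereMoment] using hρ _ hdeg
  rw [integral_eval_snoc_smul]
  simp_rw [WithLp.ofLp_smul, eval_snoc_smul, Finset.mul_sum]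
  rw [Finset.sum_comm]
  refine Finset.sum_congr rfl fun α hα => ?_
  rw [hmoment α hα, Finset.mul_sum]
  exact Finset.sum_congr rfl fun k _ => by ring

/-- With `q = φ²`, this is `t ↦ ∫ f (φ(t) ζ, t) dσ(ζ)`: odd moments of `σ` vanish, so `φ` enters
only through even powers, i.e. through powers of `q`. -/
def sliceIntegral (f : MvPolynomial (Fin (d + 1)) ℝ) (q : Polynomial ℝ) : Polynomial ℝ :=
  ∑ α ∈ f.support, Polynomial.C (coeff α f * sphereMoment (sphMeas d) (fun i => α i.castSucc)) *
    q ^ ((∑ i : Fin d, α i.castSucc) / 2) * Polynomial.X ^ α (Fin.last d)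

theorem natDegree_sliceIntegral_le (f : MvPolynomial (Fin (d + 1)) ℝ) {q : Polynomial ℝ}
    (hq : q.natDegree ≤ 2) : (sliceIntegral f q).natDegree ≤ f.totalDegree := by
  refine Polynomial.natDegree_sum_le_of_forall_le _ _ fun α hα => ?_
  have hpow := Polynomial.natDegree_pow_le_of_le ((∑ i : Fin d, α i.castSucc) / 2) hq
  have hdeg := sum_castSucc_add_last_le_totalDegree hα
  calc _ ≤ (q ^ ((∑ i : Fin d, α i.castSucc) / 2)).natDegree + α (Fin.last d) :=
        Polynomial.natDegree_mul_le_of_le (Polynomial.natDegree_C_mul_le _ _)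
          (Polynomial.natDegree_X_pow_le _)
    _ ≤ f.totalDegree := by omega

theorem integral_eval_snoc_smul_eq_eval_sliceIntegral (f : MvPolynomial (Fin (d + 1)) ℝ)
    (q : Polynomial ℝ) {r t : ℝ} (hrt : r ^ 2 = q.eval t) :
    ∫ ζ : 𝕊, eval (Fin.snoc (r • (ζ : EuclideanSpace ℝ (Fin d))) t) f ∂sphMeas d =
      (sliceIntegral f q).eval t := by
  rw [integral_eval_snoc_smul, sliceIntegral, Polynomial.eval_finsetSum]
  refine Finset.sum_congr rfl fun α _ => ?_
  simp only [Polynomial.eval_mul, Polynomial.eval_C, Polynomial.eval_pow, Polynomial.eval_X]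
  linear_combination coeff α f * t ^ α (Fin.last d) *
    pow_sum_mul_sphereMoment_sphMeas hrt (fun i => α i.castSucc)

end SphereMoments

theorem surface_cubature_general
    (d n : ℕ)
    (Sset : Set ℝ) (hSopen : IsOpen Sset)
    (φ : ℝ → ℝ)
    (c2 c1 c0 : ℝ) (hφsq : ∀ t ∈ Sset, φ t ^ 2 = c2 * t ^ 2 + c1 * t + c0)
    (w : ℝ → ℝ)
    -- a cubature rule of degree `2n−1` on the unit sphere
    (N : ℕ) (ξ : Fin N → Metric.sphere (0 : EuclideanSpace ℝ (Fin d)) 1)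
    (μw : Fin N → ℝ)
    (hsph : ∀ g : MvPolynomial (Fin d) ℝ, g.totalDegree ≤ 2 * n - 1 →
      ∫ ζ : Metric.sphere (0 : EuclideanSpace ℝ (Fin d)) 1,
          MvPolynomial.eval (ζ : EuclideanSpace ℝ (Fin d)) g ∂(sphMeas d) =
        ∑ k, μw k * MvPolynomial.eval (ξ k : EuclideanSpace ℝ (Fin d)) g)
    -- the Gauss quadrature of degree `2n−1` for `φ(t)^{d−1} w(t)` on `S`:
    (tj : Fin n → ℝ) (htS : ∀ j, tj j ∈ Sset)
    (ν : Fin n → ℝ)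
    (hgauss : ∀ g : Polynomial ℝ, g.degree ≤ (2 * n - 1 : ℕ) →
      ∫ t in Sset, g.eval t * (φ t) ^ (d - 1) * w t = ∑ j, ν j * g.eval (tj j)) :
    -- the product rule is a cubature rule of degree `2n−1` on the surface
    ∀ f : MvPolynomial (Fin (d + 1)) ℝ, f.totalDegree ≤ 2 * n - 1 →
      ∫ t in Sset, (φ t) ^ (d - 1) *
          (∫ ζ : Metric.sphere (0 : EuclideanSpace ℝ (Fin d)) 1,
            MvPolynomial.eval
              (Fin.snoc (φ t • (ζ : EuclideanSpace ℝ (Fin d))) t) f ∂(sphMeas d)) *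
          w t =
        ∑ j, ∑ k, ν j * μw k *
          MvPolynomial.eval
            (Fin.snoc (φ (tj j) • (ξ k : EuclideanSpace ℝ (Fin d))) (tj j)) f := by
  intro f hf
  set q := Polynomial.C c2 * Polynomial.X ^ 2 + Polynomial.C c1 * Polynomial.X + Polynomial.C c0
  have hslice : ∀ t ∈ Sset, ∫ ζ, eval (Fin.snoc (φ t • (ζ : EuclideanSpace ℝ (Fin d))) t) f
      ∂sphMeas d = (sliceIntegral f q).eval t := fun t ht =>
    integral_eval_snoc_smul_eq_eval_sliceIntegral f q (by simp [q, hφsq t ht])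
  have hdeg : (sliceIntegral f q).degree ≤ (2 * n - 1 : ℕ) :=
    Polynomial.degree_le_of_natDegree_le
      ((natDegree_sliceIntegral_le f Polynomial.natDegree_quadratic_le).trans hf)
  calc _ = ∫ t in Sset, (sliceIntegral f q).eval t * φ t ^ (d - 1) * w t :=
        setIntegral_congr_fun hSopen.measurableSet fun t ht => by
          simp only [hslice t ht]
          ring
    _ = ∑ j, ν j * (sliceIntegral f q).eval (tj j) := hgauss _ hdeg
    _ = _ := Finset.sum_congr rfl fun j _ => by
      rw [← hslice _ (htS j), integral_eval_snoc_smul_eq_sum _ ξ μw hsph hf, Finset.mul_sum]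
      simp only [mul_assoc]

/-- Product cubature rule of degree `2n−1` on a quadratic surface of
revolution, obtained from a cubature rule of degree `2n−1` on the unit sphere and the
Gauss quadrature of the weight `φ(t)^{d−1} w(t)` on `S`. -/
theorem surface_cubature
    (d n : ℕ) (hd : 2 ≤ d) (hn : 0 < n)
    (Sset : Set ℝ) (hSopen : IsOpen Sset) (hSne : Sset.Nonempty)
    (hSconn : Sset.OrdConnected)
    (φ : ℝ → ℝ) (hφpos : ∀ t ∈ Sset, 0 < φ t)
    (c2 c1 c0 : ℝ) (hφsq : ∀ t ∈ Sset, φ t ^ 2 = c2 * t ^ 2 + c1 * t + c0)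
    (w : ℝ → ℝ) (hw0 : ∀ t ∈ Sset, 0 ≤ w t)
    (hwpos : ∀ᵐ t ∂(volume.restrict Sset), 0 < w t)
    (hmom : ∀ k : ℕ, IntegrableOn (fun t => |t| ^ k * (φ t) ^ (d - 1) * w t) Sset)
    -- a cubature rule of degree `2n−1` on the unit sphere
    (N : ℕ) (ξ : Fin N → Metric.sphere (0 : EuclideanSpace ℝ (Fin d)) 1)
    (μw : Fin N → ℝ) (hμpos : ∀ k, 0 < μw k)
    (hsph : ∀ g : MvPolynomial (Fin d) ℝ, g.totalDegree ≤ 2 * n - 1 →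
      ∫ ζ : Metric.sphere (0 : EuclideanSpace ℝ (Fin d)) 1,
          MvPolynomial.eval (ζ : EuclideanSpace ℝ (Fin d)) g ∂(sphMeas d) =
        ∑ k, μw k * MvPolynomial.eval (ξ k : EuclideanSpace ℝ (Fin d)) g)
    -- the Gauss quadrature of degree `2n−1` for `φ(t)^{d−1} w(t)` on `S`:
    -- nodes are the zeros of the orthogonal polynomial `p` of degree `n`
    (p : Polynomial ℝ) (hpdeg : p.degree = n)
    (hporth : ∀ k < n, ∫ t in Sset, p.eval t * t ^ k * (φ t) ^ (d - 1) * w t = 0)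
    (tj : Fin n → ℝ) (htS : ∀ j, tj j ∈ Sset) (htz : ∀ j, p.eval (tj j) = 0)
    (htinj : Function.Injective tj)
    (ν : Fin n → ℝ)
    (hgauss : ∀ g : Polynomial ℝ, g.degree ≤ (2 * n - 1 : ℕ) →
      ∫ t in Sset, g.eval t * (φ t) ^ (d - 1) * w t = ∑ j, ν j * g.eval (tj j)) :
    -- the product rule is a cubature rule of degree `2n−1` on the surface
    ∀ f : MvPolynomial (Fin (d + 1)) ℝ, f.totalDegree ≤ 2 * n - 1 →
      ∫ t in Sset, (φ t) ^ (d - 1) *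
          (∫ ζ : Metric.sphere (0 : EuclideanSpace ℝ (Fin d)) 1,
            MvPolynomial.eval
              (Fin.snoc (φ t • (ζ : EuclideanSpace ℝ (Fin d))) t) f ∂(sphMeas d)) *
          w t =
        ∑ j, ∑ k, ν j * μw k *
          MvPolynomial.eval
            (Fin.snoc (φ (tj j) • (ξ k : EuclideanSpace ℝ (Fin d))) (tj j)) f :=
  surface_cubature_general d n Sset hSopen φ c2 c1 c0 hφsq w N ξ μw hsph tj htS ν hgauss
end
end

section
/- Let S ⊆ ℝ be a nonempty open interval and let φ : S → (0,∞) be such that φ(t)² is a polynomial in t of degree at most 2. Let w ≥ 0 be a weight on S, positive almost everywhere, with all moments ∫_S |t|^k φ(t) w(t) dt finite. Let t_1,…,t_n ∈ S be the zeros of the orthogonal polynomial of degree n with respect to the weight φ(t) w(t) on S, and let ν_1,…,ν_n be the Gauss quadrature weights, so that ∫_S g(t) φ(t) w(t) dt = Σ_{j=1}^n ν_j g(t_j) for every polynomial g of one variable of degree at most 2n−1. Then for every polynomial f(x,y,t) of total degree at most 2n−1 in three variables, ∫_S φ(t) (∫_0^{2π} f(φ(t) cos θ, φ(t) sin θ,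 t) dθ) w(t) dt = (π/n) Σ_{j=1}^n ν_j Σ_{k=0}^{2n−1} f(φ(t_j) cos(kπ/n), φ(t_j) sin(kπ/n), t_j). -/
open MeasureTheory MvPolynomial Real

noncomputable section


private lemma aux_int_exp (m : ℤ) :
    ∫ θ in Set.Ioo (0:ℝ) (2*π), Complex.exp ((m:ℂ) * θ * Complex.I)
      = if m = 0 then (2*π : ℂ) else 0 := by
  have h2 : (0:ℝ) ≤ 2*π := by positivity
  rw [← integral_Ioc_eq_integral_Ioo, ← intervalIntegral.integral_of_le h2]
  split_ifs with h
  · subst h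
    simp
  · have hc : (m:ℂ) * Complex.I ≠ 0 := by
      simp [Complex.I_ne_zero, h]
    have harg : ∀ θ:ℝ, (m:ℂ) * θ * Complex.I = ((m:ℂ) * Complex.I) * θ := fun θ => by ring
    simp_rw [harg]
    rw [integral_exp_mul_complex hc]
    have h1 : Complex.exp ((m:ℂ) * Complex.I * ((2*π:ℝ):ℂ)) = 1 := by
      push_cast
      rw [show (m:ℂ) * Complex.I * (2*π) = m * (2*π*Complex.I) by ring]
      exact Complex.exp_int_mul_two_pi_mul_I m
    rw [h1]
    simp

private lemma aux_sum_exp {n : ℕ} (hn : 0 < n) {m : ℤ} (hm : m.natAbs < 2*n) :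
    ∑ k ∈ Finset.range (2*n), Complex.exp ((m:ℂ) * ((k * π / n : ℝ):ℂ) * Complex.I)
      = if m = 0 then (2*n : ℂ) else 0 := by
  have hn0 : (n:ℝ) ≠ 0 := Nat.cast_ne_zero.mpr hn.ne'
  split_ifs with h
  · subst h; simp
  · have hω : ∀ k:ℕ, Complex.exp ((m:ℂ) * ((k * π / n : ℝ):ℂ) * Complex.I)
        = (Complex.exp ((m:ℂ) * (π/n) * Complex.I))^k := by
      intro k
      rw [← Complex.exp_nat_mul]
      congr 1
      push_cast
      ring
    simp_rw [hω]
    have hne : Complex.exp ((m:ℂ) * (π/n) * Complex.I) ≠ 1 := by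
      intro he
      obtain ⟨j, hj⟩ := Complex.exp_eq_one_iff.mp he
      have hπ : (π:ℂ) ≠ 0 := Complex.ofReal_ne_zero.mpr Real.pi_ne_zero
      have hnc : (n:ℂ) ≠ 0 := Nat.cast_ne_zero.mpr hn.ne'
      have hπI : (π:ℂ) * Complex.I ≠ 0 := mul_ne_zero hπ Complex.I_ne_zero
      have h3 : (m:ℂ) * ((π:ℂ)*Complex.I) = (2*(j:ℂ)*(n:ℂ)) * ((π:ℂ)*Complex.I) := by
        field_simp at hj
        linear_combination hj * ((π:ℂ)*Complex.I)
      have h4 : (m:ℂ) = ((2*j*(n:ℤ) : ℤ):ℂ) := by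
        have := mul_right_cancel₀ hπI h3
        push_cast
        exact this
      have h5 : m = 2*j*(n:ℤ) := by exact_mod_cast h4
      have hj0 : j ≠ 0 := by rintro rfl; simp at h5; exact h h5
      have h6 : m.natAbs = 2 * j.natAbs * n := by rw [h5]; simp [Int.natAbs_mul, mul_assoc]
      have h7 : 2*n ≤ 2 * j.natAbs * n := by
        have : 1 ≤ j.natAbs := Nat.one_le_iff_ne_zero.mpr (Int.natAbs_ne_zero.mpr hj0)
        nlinarith
      omega
    rw [geom_sum_eq hne]
    have hpow : (Complex.exp ((m:ℂ) * (π/n) * Complex.I))^(2*n) = 1 := by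
      rw [← Complex.exp_nat_mul]
      rw [show ((2*n : ℕ):ℂ) * ((m:ℂ) * (π/n) * Complex.I) = m * (2*π*Complex.I) * (n/n) by push_cast; ring]
      rw [div_self (Nat.cast_ne_zero.mpr hn.ne'), mul_one]
      exact Complex.exp_int_mul_two_pi_mul_I m
    rw [hpow]
    simp

private lemma aux_exp_quad {n : ℕ} (hn : 0 < n) {m : ℤ} (hm : m.natAbs < 2*n) :
    ∫ θ in Set.Ioo (0:ℝ) (2*π), Complex.exp ((m:ℂ) * θ * Complex.I)
      = ((π/n : ℝ):ℂ) * ∑ k ∈ Finset.range (2*n),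
          Complex.exp ((m:ℂ) * ((k * π / n : ℝ):ℂ) * Complex.I) := by
  rw [aux_int_exp, aux_sum_exp hn hm]
  have hn0 : (n:ℝ) ≠ 0 := Nat.cast_ne_zero.mpr hn.ne'
  have hnc : (n:ℂ) ≠ 0 := Nat.cast_ne_zero.mpr hn.ne'
  split_ifs with h
  · push_cast
    field_simp
  · simp

private lemma aux_exp_pow (θ : ℝ) (j k : ℕ) :
    Complex.exp ((θ:ℂ) * Complex.I) ^ j * Complex.exp (-((θ:ℂ) * Complex.I)) ^ k
      = Complex.exp (((((j:ℤ) - (k:ℤ)):ℤ):ℂ) * θ * Complex.I) := by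
  rw [← Complex.exp_nat_mul, ← Complex.exp_nat_mul, ← Complex.exp_add]
  congr 1
  push_cast
  ring

private lemma aux_expand (a b : ℕ) (θ : ℝ) :
    (Complex.cos θ)^a * (Complex.sin θ)^b
      = ∑ p ∈ Finset.range (a+1), ∑ q ∈ Finset.range (b+1),
          ((a.choose p : ℂ) * (b.choose q) * (-1)^(b-q) * (1/2)^(a+b) * Complex.I^b)
            * Complex.exp (((((p + (b-q) : ℕ) : ℤ) - (((a-p) + q : ℕ) : ℤ) : ℤ):ℂ)
                * θ * Complex.I) := by
  set u := Complex.exp ((θ:ℂ)*Complex.I) with hud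
  set v := Complex.exp (-((θ:ℂ)*Complex.I)) with hvd
  have hcos : (Complex.cos θ)^a
      = (∑ p ∈ Finset.range (a+1), u^p * v^(a-p) * (a.choose p : ℂ)) * (1/2:ℂ)^a := by
    have h1 : Complex.cos (θ:ℂ) = (u + v) * (1/2) := by
      simp only [Complex.cos, hud, hvd, neg_mul]
      ring
    rw [h1, mul_pow, add_pow]
  have hsin : (Complex.sin θ)^b
      = (∑ q ∈ Finset.range (b+1), v^q * (-u)^(b-q) * (b.choose q : ℂ))
          * ((1/2:ℂ)^b * Complex.I^b) := by
    have h1 : Complex.sin (θ:ℂ) = (v + -u) * (1/2 * Complex.I) := by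
      simp only [Complex.sin, hud, hvd, neg_mul]
      ring
    rw [h1, mul_pow, add_pow, mul_pow]
  rw [hcos, hsin, Finset.sum_mul, Finset.sum_mul]
  refine Finset.sum_congr rfl fun p hp => ?_
  rw [Finset.sum_mul, Finset.mul_sum]
  refine Finset.sum_congr rfl fun q hq => ?_
  have hpa : p ≤ a := Nat.lt_succ_iff.mp (Finset.mem_range.mp hp)
  have hqb : q ≤ b := Nat.lt_succ_iff.mp (Finset.mem_range.mp hq)
  have he : u^(p + (b-q)) * v^((a-p) + q)
      = Complex.exp (((((p + (b-q) : ℕ) : ℤ) - (((a-p) + q : ℕ) : ℤ) : ℤ):ℂ) * θ * Complex.I) :=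
    aux_exp_pow θ _ _
  calc u ^ p * v ^ (a - p) * (a.choose p:ℂ) * (1/2:ℂ) ^ a
        * (v ^ q * (-u) ^ (b - q) * (b.choose q:ℂ) * ((1/2:ℂ) ^ b * Complex.I ^ b))
      = (u^(p + (b-q)) * v^((a-p) + q)) * ((a.choose p : ℂ) * (b.choose q) * (-1)^(b-q)
          * (1/2)^(a+b) * Complex.I^b) := by
        rw [pow_add u, pow_add v, pow_add (1/2:ℂ), neg_pow]
        ring
    _ = _ := by rw [he]; ring

private lemma aux_intgOn (m : ℤ) (c : ℂ) :
    IntegrableOn (fun θ:ℝ => c * Complex.exp ((m:ℂ)*θ*Complex.I)) (Set.Ioo 0 (2*π)) := by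
  have hc : Continuous fun θ:ℝ => c * Complex.exp ((m:ℂ)*θ*Complex.I) := by
    apply Continuous.mul continuous_const
    apply Complex.continuous_exp.comp
    continuity
  exact (hc.integrableOn_Icc).mono_set Set.Ioo_subset_Icc_self

private lemma aux_trigC {n : ℕ} (hn : 0 < n) {a b : ℕ} (hab : a + b < 2*n) :
    ∫ θ in Set.Ioo (0:ℝ) (2*π), (Complex.cos θ)^a * (Complex.sin θ)^b
      = ((π/n : ℝ):ℂ) * ∑ k ∈ Finset.range (2*n),
          (Complex.cos ((k * π / n : ℝ):ℂ))^a * (Complex.sin ((k * π / n : ℝ):ℂ))^b := by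
  simp_rw [aux_expand a b]
  rw [integral_finset_sum _ (fun p _ => integrable_finset_sum _ (fun q _ => aux_intgOn _ _))]
  simp only [Finset.mul_sum]
  rw [Finset.sum_comm]
  refine Finset.sum_congr rfl fun p hp => ?_
  rw [Finset.sum_comm]
  rw [integral_finset_sum _ (fun q _ => aux_intgOn _ _)]
  refine Finset.sum_congr rfl fun q hq => ?_
  have hpa : p ≤ a := Nat.lt_succ_iff.mp (Finset.mem_range.mp hp)
  have hqb : q ≤ b := Nat.lt_succ_iff.mp (Finset.mem_range.mp hq)
  have hm : (((p + (b-q) : ℕ) : ℤ) - (((a-p) + q : ℕ) : ℤ)).natAbs < 2*n := by omega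
  rw [MeasureTheory.integral_const_mul, aux_exp_quad hn hm, Finset.mul_sum, Finset.mul_sum]
  exact Finset.sum_congr rfl fun k _ => by ring

private lemma aux_trigR {n : ℕ} (hn : 0 < n) {a b : ℕ} (hab : a + b < 2*n) :
    ∫ θ in Set.Ioo (0:ℝ) (2*π), (Real.cos θ)^a * (Real.sin θ)^b
      = (π/n) * ∑ k ∈ Finset.range (2*n),
          (Real.cos (k * π / n))^a * (Real.sin (k * π / n))^b := by
  have hfun : (fun θ:ℝ => (Complex.cos (θ:ℂ))^a * (Complex.sin (θ:ℂ))^b)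
      = fun θ:ℝ => ((((Real.cos θ)^a * (Real.sin θ)^b : ℝ)):ℂ) :=
    funext fun θ => by push_cast; ring
  have hL : ∫ θ in Set.Ioo (0:ℝ) (2*π), (Complex.cos θ)^a * (Complex.sin θ)^b
      = ((∫ θ in Set.Ioo (0:ℝ) (2*π), (Real.cos θ)^a * (Real.sin θ)^b : ℝ):ℂ) := by
    rw [hfun]; exact integral_ofReal
  have h2 := aux_trigC hn hab
  rw [hL] at h2
  rw [← Complex.ofReal_inj, h2]
  push_cast [Complex.ofReal_cos, Complex.ofReal_sin]
  ring

private lemma aux_oddR {a b : ℕ} (hab : Odd (a + b)) :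
    ∫ θ in Set.Ioo (0:ℝ) (2*π), (Real.cos θ)^a * (Real.sin θ)^b = 0 := by
  have hC : ∫ θ in Set.Ioo (0:ℝ) (2*π), (Complex.cos θ)^a * (Complex.sin θ)^b = 0 := by
    simp_rw [aux_expand a b]
    rw [integral_finset_sum _ (fun p _ => integrable_finset_sum _ (fun q _ => aux_intgOn _ _))]
    refine Finset.sum_eq_zero fun p hp => ?_
    rw [integral_finset_sum _ (fun q _ => aux_intgOn _ _)]
    refine Finset.sum_eq_zero fun q hq => ?_
    have hpa : p ≤ a := Nat.lt_succ_iff.mp (Finset.mem_range.mp hp)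
    have hqb : q ≤ b := Nat.lt_succ_iff.mp (Finset.mem_range.mp hq)
    have hodd := Nat.odd_iff.mp hab
    have hm : (((p + (b-q) : ℕ) : ℤ) - (((a-p) + q : ℕ) : ℤ)) ≠ 0 := by omega
    rw [MeasureTheory.integral_const_mul, aux_int_exp, if_neg hm, mul_zero]
  have hfun : (fun θ:ℝ => (Complex.cos (θ:ℂ))^a * (Complex.sin (θ:ℂ))^b)
      = fun θ:ℝ => ((((Real.cos θ)^a * (Real.sin θ)^b : ℝ)):ℂ) :=
    funext fun θ => by push_cast; ring
  have hL : ∫ θ in Set.Ioo (0:ℝ) (2*π), (Complex.cos θ)^a * (Complex.sin θ)^b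
      = ((∫ θ in Set.Ioo (0:ℝ) (2*π), (Real.cos θ)^a * (Real.sin θ)^b : ℝ):ℂ) := by
    rw [hfun]; exact integral_ofReal
  rw [hL] at hC
  exact_mod_cast hC

private lemma aux_poly_int {Sset : Set ℝ} (hS : MeasurableSet Sset)
    {φ w : ℝ → ℝ} (hφ0 : ∀ t ∈ Sset, 0 ≤ φ t) (hw0 : ∀ t ∈ Sset, 0 ≤ w t)
    (hmom : ∀ k : ℕ, IntegrableOn (fun t => |t| ^ k * φ t * w t) Sset)
    (g : Polynomial ℝ) :
    IntegrableOn (fun t => g.eval t * φ t * w t) Sset := by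
  have hb : IntegrableOn
      (fun t => ∑ k ∈ Finset.range (g.natDegree+1), |g.coeff k| * (|t|^k * φ t * w t)) Sset :=
    integrable_finset_sum _ (fun k _ => ((hmom k).const_mul _))
  refine hb.mono' ?_ ?_
  · have h0 := (hmom 0).aestronglyMeasurable
    have hφw : AEStronglyMeasurable (fun t => φ t * w t) (volume.restrict Sset) := by
      have : (fun t:ℝ => |t| ^ 0 * φ t * w t) = fun t => φ t * w t := by
        funext t; simp [mul_assoc]
      rwa [this] at h0
    have hg : Continuous fun t:ℝ => g.eval t := g.continuous
    exact (hg.aestronglyMeasurable.mul hφw).congr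
      (Filter.Eventually.of_forall fun t => by simp [mul_assoc])
  · refine (ae_restrict_iff' hS).mpr (Filter.Eventually.of_forall fun t ht => ?_)
    have hφwt : 0 ≤ φ t * w t := mul_nonneg (hφ0 t ht) (hw0 t ht)
    have h1 : |g.eval t| ≤ ∑ k ∈ Finset.range (g.natDegree+1), |g.coeff k| * |t|^k := by
      rw [Polynomial.eval_eq_sum_range]
      refine (Finset.abs_sum_le_sum_abs _ _).trans ?_
      refine Finset.sum_le_sum fun k _ => ?_
      rw [abs_mul, abs_pow]
    calc ‖g.eval t * φ t * w t‖ = |g.eval t| * (φ t * w t) := by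
          rw [Real.norm_eq_abs, abs_mul, abs_mul, abs_of_nonneg (hφ0 t ht),
            abs_of_nonneg (hw0 t ht), mul_assoc]
      _ ≤ (∑ k ∈ Finset.range (g.natDegree+1), |g.coeff k| * |t|^k) * (φ t * w t) :=
          mul_le_mul_of_nonneg_right h1 hφwt
      _ = ∑ k ∈ Finset.range (g.natDegree+1), |g.coeff k| * (|t|^k * φ t * w t) := by
          rw [Finset.sum_mul]; exact Finset.sum_congr rfl fun k _ => by ring

/-- Cubature rule of degree `2n−1` on a quadratic surface of revolution
in `ℝ³`, combining the Gauss quadrature for `φ(t) w(t)` on `S` with the `2n`-point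
equally spaced quadrature on the circle:
`∫_S φ(t) (∫_0^{2π} f(φ(t)cos θ, φ(t)sin θ, t) dθ) w(t) dt
  = (π/n) Σ_j ν_j Σ_{k=0}^{2n−1} f(φ(t_j)cos(kπ/n), φ(t_j)sin(kπ/n), t_j)`. -/
theorem surface_cubature_dim3
    (n : ℕ) (hn : 0 < n)
    (Sset : Set ℝ) (hSopen : IsOpen Sset) (hSne : Sset.Nonempty)
    (hSconn : Sset.OrdConnected)
    (φ : ℝ → ℝ) (hφpos : ∀ t ∈ Sset, 0 < φ t)
    (c2 c1 c0 : ℝ) (hφsq : ∀ t ∈ Sset, φ t ^ 2 = c2 * t ^ 2 + c1 * t + c0)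
    (w : ℝ → ℝ) (hw0 : ∀ t ∈ Sset, 0 ≤ w t)
    (hwpos : ∀ᵐ t ∂(volume.restrict Sset), 0 < w t)
    (hmom : ∀ k : ℕ, IntegrableOn (fun t => |t| ^ k * φ t * w t) Sset)
    -- the Gauss quadrature of degree `2n−1` for `φ(t) w(t)` on `S`:
    -- nodes are the zeros of the orthogonal polynomial `p` of degree `n`
    (p : Polynomial ℝ) (hpdeg : p.degree = n)
    (hporth : ∀ k < n, ∫ t in Sset, p.eval t * t ^ k * φ t * w t = 0)
    (tj : Fin n → ℝ) (htS : ∀ j, tj j ∈ Sset) (htz : ∀ j, p.eval (tj j) = 0)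
    (htinj : Function.Injective tj)
    (ν : Fin n → ℝ)
    (hgauss : ∀ g : Polynomial ℝ, g.degree ≤ (2 * n - 1 : ℕ) →
      ∫ t in Sset, g.eval t * φ t * w t = ∑ j, ν j * g.eval (tj j)) :
    ∀ f : MvPolynomial (Fin 3) ℝ, f.totalDegree ≤ 2 * n - 1 →
      ∫ t in Sset, φ t *
          (∫ θ in Set.Ioo (0 : ℝ) (2 * π),
            MvPolynomial.eval ![φ t * Real.cos θ, φ t * Real.sin θ, t] f) * w t =
        (π / n) * ∑ j, ν j * ∑ k ∈ Finset.range (2 * n),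
          MvPolynomial.eval
            ![φ (tj j) * Real.cos (k * π / n), φ (tj j) * Real.sin (k * π / n), tj j] f := by
  intro f hf
  have hS : MeasurableSet Sset := hSopen.measurableSet
  have hφ0 : ∀ t ∈ Sset, 0 ≤ φ t := fun t ht => (hφpos t ht).le
  have hdlt : ∀ d ∈ f.support, d 0 + d 1 < 2*n ∧ d 0 + d 1 + d 2 ≤ 2*n - 1 := by
    intro d hd
    have h1 := MvPolynomial.le_totalDegree hd
    have h2 : (d.sum fun _ e => e) = d 0 + d 1 + d 2 := by
      rw [Finsupp.sum_fintype _ _ (fun _ => rfl), Fin.sum_univ_three]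
    rw [h2] at h1
    omega
  have heval : ∀ x y t : ℝ, MvPolynomial.eval ![x,y,t] f
      = ∑ d ∈ f.support, MvPolynomial.coeff d f * (x^(d 0) * y^(d 1) * t^(d 2)) := by
    intro x y t
    rw [MvPolynomial.eval_eq']
    refine Finset.sum_congr rfl fun d _ => ?_
    rw [Fin.prod_univ_three]
    simp
  -- inner circle integral
  have hinner : ∀ A t : ℝ, (∫ θ in Set.Ioo (0:ℝ) (2*π),
        MvPolynomial.eval ![A * Real.cos θ, A * Real.sin θ, t] f)
      = ∑ d ∈ f.support, MvPolynomial.coeff d f * A^(d 0 + d 1) * t^(d 2) *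
          (∫ θ in Set.Ioo (0:ℝ) (2*π), (Real.cos θ)^(d 0) * (Real.sin θ)^(d 1)) := by
    intro A t
    simp_rw [heval]
    rw [integral_finset_sum]
    · refine Finset.sum_congr rfl fun d _ => ?_
      have hfun : ∀ θ:ℝ, MvPolynomial.coeff d f *
            ((A*Real.cos θ)^(d 0) * (A*Real.sin θ)^(d 1) * t^(d 2))
          = (MvPolynomial.coeff d f * A^(d 0 + d 1) * t^(d 2)) *
            ((Real.cos θ)^(d 0) * (Real.sin θ)^(d 1)) := by
        intro θ; rw [mul_pow, mul_pow, pow_add]; ring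
      simp_rw [hfun]
      rw [MeasureTheory.integral_const_mul]
    · intro d _
      have hc : Continuous fun θ:ℝ => MvPolynomial.coeff d f *
          ((A*Real.cos θ)^(d 0) * (A*Real.sin θ)^(d 1) * t^(d 2)) := by continuity
      exact (hc.integrableOn_Icc).mono_set Set.Ioo_subset_Icc_self
  -- per-monomial facts
  have hmono : ∀ d ∈ f.support,
      IntegrableOn (fun t => (MvPolynomial.coeff d f *
          (∫ θ in Set.Ioo (0:ℝ) (2*π), (Real.cos θ)^(d 0) * (Real.sin θ)^(d 1))) *
          ((φ t)^(d 0 + d 1 + 1) * t^(d 2) * w t)) Sset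
      ∧ (∫ t in Sset, (MvPolynomial.coeff d f *
          (∫ θ in Set.Ioo (0:ℝ) (2*π), (Real.cos θ)^(d 0) * (Real.sin θ)^(d 1))) *
          ((φ t)^(d 0 + d 1 + 1) * t^(d 2) * w t))
        = MvPolynomial.coeff d f *
          (∫ θ in Set.Ioo (0:ℝ) (2*π), (Real.cos θ)^(d 0) * (Real.sin θ)^(d 1)) *
          (∑ j, ν j * ((φ (tj j))^(d 0 + d 1) * (tj j)^(d 2))) := by
    intro d hd
    obtain ⟨hlt, hle⟩ := hdlt d hd
    rcases Nat.even_or_odd (d 0 + d 1) with he | ho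
    · -- even case
      obtain ⟨h, hh⟩ := he
      set g : Polynomial ℝ := (Polynomial.C c2 * Polynomial.X^2 + Polynomial.C c1 * Polynomial.X
          + Polynomial.C c0)^h * Polynomial.X^(d 2) with hgdef
      have hgeval : ∀ t ∈ Sset, g.eval t = (φ t)^(d 0 + d 1) * t^(d 2) := by
        intro t ht
        have : (2:ℕ) * h = d 0 + d 1 := by omega
        simp only [hgdef, Polynomial.eval_mul, Polynomial.eval_pow, Polynomial.eval_add,
          Polynomial.eval_C, Polynomial.eval_X, Polynomial.eval_mul]
        rw [← hφsq t ht, ← pow_mul, this]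
      have hgdeg : g.degree ≤ (2*n - 1 : ℕ) := by
        apply Polynomial.degree_le_of_natDegree_le
        calc g.natDegree ≤ ((Polynomial.C c2 * Polynomial.X^2 + Polynomial.C c1 * Polynomial.X
              + Polynomial.C c0)^h).natDegree + (Polynomial.X^(d 2) : Polynomial ℝ).natDegree :=
            Polynomial.natDegree_mul_le
          _ ≤ h * 2 + d 2 := by
            gcongr
            · exact Polynomial.natDegree_pow_le.trans
                (Nat.mul_le_mul_left h Polynomial.natDegree_quadratic_le)
            · exact (Polynomial.natDegree_X_pow _).le
          _ ≤ 2*n - 1 := by omega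
      have hEqOn : Set.EqOn
          (fun t => (MvPolynomial.coeff d f *
            (∫ θ in Set.Ioo (0:ℝ) (2*π), (Real.cos θ)^(d 0) * (Real.sin θ)^(d 1))) *
            (g.eval t * φ t * w t))
          (fun t => (MvPolynomial.coeff d f *
            (∫ θ in Set.Ioo (0:ℝ) (2*π), (Real.cos θ)^(d 0) * (Real.sin θ)^(d 1))) *
            ((φ t)^(d 0 + d 1 + 1) * t^(d 2) * w t)) Sset := by
        intro t ht
        simp only
        rw [hgeval t ht, pow_succ]
        ring
      have hint0 : IntegrableOn (fun t => (MvPolynomial.coeff d f *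
            (∫ θ in Set.Ioo (0:ℝ) (2*π), (Real.cos θ)^(d 0) * (Real.sin θ)^(d 1))) *
            (g.eval t * φ t * w t)) Sset :=
        (aux_poly_int hS hφ0 hw0 hmom g).const_mul _
      have hint := hint0.congr_fun hEqOn hS
      refine ⟨hint, ?_⟩
      rw [← setIntegral_congr_fun hS hEqOn, MeasureTheory.integral_const_mul, hgauss g hgdeg]
      congr 1
      exact Finset.sum_congr rfl fun j _ => by rw [hgeval (tj j) (htS j)]
    · -- odd case
      have hC0 : (∫ θ in Set.Ioo (0:ℝ) (2*π), (Real.cos θ)^(d 0) * (Real.sin θ)^(d 1)) = 0 :=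
        aux_oddR ho
      have hzero : (fun t => (MvPolynomial.coeff d f *
            (∫ θ in Set.Ioo (0:ℝ) (2*π), (Real.cos θ)^(d 0) * (Real.sin θ)^(d 1))) *
            ((φ t)^(d 0 + d 1 + 1) * t^(d 2) * w t)) = fun _ => (0:ℝ) := by
        funext t; rw [hC0]; ring
      constructor
      · rw [hzero]; exact integrableOn_zero
      · rw [hzero, hC0]
        simp
  -- LHS
  have hLHS : ∫ t in Sset, φ t *
          (∫ θ in Set.Ioo (0 : ℝ) (2 * π),
            MvPolynomial.eval ![φ t * Real.cos θ, φ t * Real.sin θ, t] f) * w t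
      = ∑ d ∈ f.support, MvPolynomial.coeff d f *
          (∫ θ in Set.Ioo (0:ℝ) (2*π), (Real.cos θ)^(d 0) * (Real.sin θ)^(d 1)) *
          (∑ j, ν j * ((φ (tj j))^(d 0 + d 1) * (tj j)^(d 2))) := by
    rw [setIntegral_congr_fun hS (g := fun t => ∑ d ∈ f.support, (MvPolynomial.coeff d f *
          (∫ θ in Set.Ioo (0:ℝ) (2*π), (Real.cos θ)^(d 0) * (Real.sin θ)^(d 1))) *
          ((φ t)^(d 0 + d 1 + 1) * t^(d 2) * w t)) ?_]
    · rw [integral_finset_sum _ (fun d hd => (hmono d hd).1)]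
      exact Finset.sum_congr rfl fun d hd => (hmono d hd).2
    · intro t ht
      simp only
      rw [hinner (φ t) t, Finset.mul_sum, Finset.sum_mul]
      exact Finset.sum_congr rfl fun d _ => by rw [pow_succ]; ring
  -- RHS
  have hRHS : (π / n) * ∑ j, ν j * ∑ k ∈ Finset.range (2 * n),
          MvPolynomial.eval
            ![φ (tj j) * Real.cos (k * π / n), φ (tj j) * Real.sin (k * π / n), tj j] f
      = ∑ d ∈ f.support, MvPolynomial.coeff d f *
          (∫ θ in Set.Ioo (0:ℝ) (2*π), (Real.cos θ)^(d 0) * (Real.sin θ)^(d 1)) *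
          (∑ j, ν j * ((φ (tj j))^(d 0 + d 1) * (tj j)^(d 2))) := by
    have hCd : ∀ d ∈ f.support,
        (∫ θ in Set.Ioo (0:ℝ) (2*π), (Real.cos θ)^(d 0) * (Real.sin θ)^(d 1))
          = (π/n) * ∑ k ∈ Finset.range (2*n),
              (Real.cos (k * π / n))^(d 0) * (Real.sin (k * π / n))^(d 1) :=
      fun d hd => aux_trigR hn (hdlt d hd).1
    simp_rw [heval]
    calc (π / n) * ∑ j, ν j * ∑ k ∈ Finset.range (2 * n), ∑ d ∈ f.support,
            MvPolynomial.coeff d f * ((φ (tj j) * Real.cos (k * π / n))^(d 0) *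
              (φ (tj j) * Real.sin (k * π / n))^(d 1) * (tj j)^(d 2))
        = ∑ j, ∑ k ∈ Finset.range (2*n), ∑ d ∈ f.support,
            (π/n) * (ν j * (MvPolynomial.coeff d f * ((φ (tj j) * Real.cos (k * π / n))^(d 0) *
              (φ (tj j) * Real.sin (k * π / n))^(d 1) * (tj j)^(d 2)))) := by
          simp only [Finset.mul_sum]
      _ = ∑ d ∈ f.support, ∑ j, ∑ k ∈ Finset.range (2*n),
            (π/n) * (ν j * (MvPolynomial.coeff d f * ((φ (tj j) * Real.cos (k * π / n))^(d 0) *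
              (φ (tj j) * Real.sin (k * π / n))^(d 1) * (tj j)^(d 2)))) := by
          calc ∑ j : Fin n, ∑ k ∈ Finset.range (2*n), ∑ d ∈ f.support,
                (π/n) * (ν j * (MvPolynomial.coeff d f * ((φ (tj j) * Real.cos (k * π / n))^(d 0) *
                  (φ (tj j) * Real.sin (k * π / n))^(d 1) * (tj j)^(d 2))))
              = ∑ j : Fin n, ∑ d ∈ f.support, ∑ k ∈ Finset.range (2*n),
                (π/n) * (ν j * (MvPolynomial.coeff d f * ((φ (tj j) * Real.cos (k * π / n))^(d 0) *
                  (φ (tj j) * Real.sin (k * π / n))^(d 1) * (tj j)^(d 2)))) :=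
                Finset.sum_congr rfl fun j _ => Finset.sum_comm
            _ = _ := Finset.sum_comm
      _ = ∑ d ∈ f.support, MvPolynomial.coeff d f *
            (∫ θ in Set.Ioo (0:ℝ) (2*π), (Real.cos θ)^(d 0) * (Real.sin θ)^(d 1)) *
            (∑ j, ν j * ((φ (tj j))^(d 0 + d 1) * (tj j)^(d 2))) := by
          refine Finset.sum_congr rfl fun d hd => ?_
          rw [hCd d hd]
          simp only [Finset.mul_sum, Finset.sum_mul]
          refine Finset.sum_congr rfl fun j _ => Finset.sum_congr rfl fun k _ => ?_
          rw [mul_pow, mul_pow, pow_add]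
          ring
  rw [hLHS, hRHS]
end
end
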